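/- arXiv:0812.0431 — 5 statements merged into one kernel-verified Lean document; each statement's English description precedes it below -/
import Mathlib

section
/- If θ ∈ (0,1) is an irrational number of David type (i.e. its continued fraction partial quotients satisfy log a_n = O(√n)), and α ∈ (0,1) is the irrational number with α ≡ 2θ (mod 1), then α is also of David type. -/
/-- The Gauss-map orbit of θ. -/
noncomputable def cfFrac (θ : ℝ) : ℕ → ℝ
  | 0 => θ
  | n + 1 => Int.fract (1 / cfFrac θ n)

/-- The n-th partial quotient a_n (for n ≥ 1) of the continued fraction of θ ∈ (0,1). -/
noncomputable def cfA (θ : ℝ) (n : ℕ) : ℕ := ⌊1 / cfFrac θ (n - 1)⌋₊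

/-- The denominators q_n of the continued-fraction convergents of θ. -/
noncomputable def cfQden (θ : ℝ) : ℕ → ℕ
  | 0 => 1
  | 1 => cfA θ 1
  | n + 2 => cfA θ (n + 2) * cfQden θ (n + 1) + cfQden θ n

/-- θ is of David type if log a_n = O(√n). -/
def IsDavidType (θ : ℝ) : Prop :=
  ∃ C > (0 : ℝ), ∀ᶠ n : ℕ in Filter.atTop, Real.log (cfA θ n) ≤ C * Real.sqrt n

set_option linter.unusedSectionVars false

noncomputable def cfP (x : ℝ) : ℕ → ℕ
  | 0 => 0
  | 1 => 1
  | n + 2 => cfA x (n + 2) * cfP x (n + 1) + cfP x n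

noncomputable def bprod (x : ℝ) (n : ℕ) : ℝ := ∏ i ∈ Finset.range (n+1), cfFrac x i

variable {x : ℝ}

lemma frac_spec (hx : x ∈ Set.Ioo (0:ℝ) 1) (hi : Irrational x) (n : ℕ) :
    cfFrac x n ∈ Set.Ioo (0:ℝ) 1 ∧ Irrational (cfFrac x n) := by
  induction n with
  | zero => exact ⟨hx, hi⟩
  | succ n ih =>
    obtain ⟨⟨h0, h1⟩, hirr⟩ := ih
    have hinv : Irrational (1 / cfFrac x n) := by
      rw [one_div]; exact hirr.inv
    have hfr : Irrational (cfFrac x (n+1)) := by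
      show Irrational (Int.fract (1 / cfFrac x n))
      rw [Int.fract]; exact hinv.sub_intCast _
    refine ⟨⟨?_, ?_⟩, hfr⟩
    · exact lt_of_le_of_ne (Int.fract_nonneg _) (Ne.symm hfr.ne_zero)
    · exact Int.fract_lt_one _

lemma inv_frac_eq (hx : x ∈ Set.Ioo (0:ℝ) 1) (hi : Irrational x) (n : ℕ) :
    1 / cfFrac x n = (cfA x (n+1) : ℝ) + cfFrac x (n+1) := by
  obtain ⟨⟨h0, h1⟩, _⟩ := frac_spec hx hi n
  have hr : (0:ℝ) ≤ 1 / cfFrac x n := by positivity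
  have hA : (cfA x (n+1) : ℝ) = (⌊1 / cfFrac x n⌋ : ℤ) := by
    rw [show cfA x (n+1) = ⌊1 / cfFrac x n⌋₊ from rfl]
    rw [← Int.floor_toNat]
    exact_mod_cast congrArg (fun z : ℤ => (z:ℝ)) (Int.toNat_of_nonneg (Int.floor_nonneg.2 hr))
  rw [hA]
  show _ = _ + Int.fract (1 / cfFrac x n)
  rw [Int.fract]; ring

lemma one_le_cfA (hx : x ∈ Set.Ioo (0:ℝ) 1) (hi : Irrational x) (n : ℕ) :
    1 ≤ cfA x (n+1) := by
  obtain ⟨⟨h0, h1⟩, _⟩ := frac_spec hx hi n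
  have : (1:ℝ) ≤ 1 / cfFrac x n := by
    rw [le_div_iff₀ h0]; linarith
  exact Nat.le_floor (by exact_mod_cast this)

section QNat
variable (hx : x ∈ Set.Ioo (0:ℝ) 1) (hi : Irrational x)
include hx hi

lemma q_pos : ∀ n, 1 ≤ cfQden x n := by
  have h1 := one_le_cfA hx hi
  intro n
  induction n using Nat.strong_induction_on with
  | _ n ih =>
    match n with
    | 0 => simp [cfQden]
    | 1 => simpa [cfQden] using h1 0
    | (n+2) =>
      have := ih n (by omega)
      have := ih (n+1) (by omega)
      have := h1 (n+1)
      simp only [cfQden]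
      nlinarith

lemma q_mono_succ : ∀ n, cfQden x n ≤ cfQden x (n+1) := by
  intro n
  match n with
  | 0 => simpa [cfQden] using one_le_cfA hx hi 0
  | (n+1) =>
    have h1 := one_le_cfA hx hi (n+1)
    have h2 := q_pos hx hi n
    have h3 := q_pos hx hi (n+1)
    show cfQden x (n+1) ≤ cfQden x (n+2)
    simp only [cfQden]
    nlinarith

lemma q_mono : Monotone (cfQden x) :=
  monotone_nat_of_le_succ (q_mono_succ hx hi)

lemma q_add_two : ∀ n, cfQden x (n+1) + cfQden x n ≤ cfQden x (n+2) := by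
  intro n
  have h1 := one_le_cfA hx hi (n+1)
  show _ ≤ cfQden x (n+2)
  simp only [cfQden]
  nlinarith [q_pos hx hi (n+1)]

lemma q_linear : ∀ n, n ≤ 2 * cfQden x n := by
  intro n
  induction n using Nat.strong_induction_on with
  | _ n ih =>
    match n with
    | 0 => omega
    | 1 => have := q_pos hx hi 1; omega
    | (n+2) =>
      have := ih n (by omega)
      have := q_add_two hx hi n
      have := q_pos hx hi (n+1)
      omega

lemma q_five (n : ℕ) : 5 * cfQden x (n+1) ≤ cfQden x (n+5) := by
  have h2 : cfQden x (n+1) + cfQden x n ≤ cfQden x (n+2) := q_add_two hx hi n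
  have h3 : cfQden x (n+2) + cfQden x (n+1) ≤ cfQden x (n+3) := q_add_two hx hi (n+1)
  have h4 : cfQden x (n+3) + cfQden x (n+2) ≤ cfQden x (n+4) := q_add_two hx hi (n+2)
  have h5 : cfQden x (n+4) + cfQden x (n+3) ≤ cfQden x (n+5) := q_add_two hx hi (n+3)
  have m1 := q_mono_succ hx hi n
  have m2 := q_mono_succ hx hi (n+1)
  omega

lemma q_succ_le (n : ℕ) : cfQden x (n+1) ≤ (cfA x (n+1) + 1) * cfQden x n := by
  match n with
  | 0 => simp [cfQden]
  | (n+1) =>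
    show cfQden x (n+2) ≤ _
    simp only [cfQden]
    nlinarith [q_mono_succ hx hi n]

lemma a_mul_le (n : ℕ) : cfA x (n+1) * cfQden x n ≤ cfQden x (n+1) := by
  match n with
  | 0 => simp [cfQden]
  | (n+1) =>
    show cfA x (n+2) * cfQden x (n+1) ≤ cfQden x (n+2)
    simp only [cfQden]; omega

end QNat

lemma det_eq (n : ℕ) :
    (cfP x (n+1) : ℤ) * cfQden x n - cfP x n * cfQden x (n+1) = (-1)^n := by
  induction n with
  | zero => simp [cfP, cfQden]
  | succ n ih =>
    have h1 : cfP x (n+2) = cfA x (n+2) * cfP x (n+1) + cfP x n := rfl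
    have h2 : cfQden x (n+2) = cfA x (n+2) * cfQden x (n+1) + cfQden x n := rfl
    show (cfP x (n+2) : ℤ) * cfQden x (n+1) - cfP x (n+1) * cfQden x (n+2) = (-1)^(n+1)
    rw [h1, h2]
    push_cast
    ring_nf
    ring_nf at ih
    linarith [ih]

lemma bprod_pos (hx : x ∈ Set.Ioo (0:ℝ) 1) (hi : Irrational x) (n : ℕ) :
    0 < bprod x n := by
  apply Finset.prod_pos
  intro i _
  exact (frac_spec hx hi i).1.1

lemma bprod_succ (n : ℕ) : bprod x (n+1) = bprod x n * cfFrac x (n+1) := by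
  rw [bprod, Finset.prod_range_succ]; rfl

lemma bprod_lt (hx : x ∈ Set.Ioo (0:ℝ) 1) (hi : Irrational x) (n : ℕ) :
    bprod x (n+1) < bprod x n := by
  rw [bprod_succ]
  have h := (frac_spec hx hi (n+1)).1
  nlinarith [bprod_pos hx hi n, h.1, h.2]

lemma err_eq (hx : x ∈ Set.Ioo (0:ℝ) 1) (hi : Irrational x) :
    ∀ n, (cfQden x n : ℝ) * x - cfP x n = (-1)^n * bprod x n := by
  have key : ∀ n, ((cfQden x n : ℝ) * x - cfP x n = (-1)^n * bprod x n) ∧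
      ((cfQden x (n+1) : ℝ) * x - cfP x (n+1) = (-1)^(n+1) * bprod x (n+1)) := by
    intro n
    induction n with
    | zero =>
      constructor
      · simp [cfQden, cfP, bprod, cfFrac]
      · have h0 := (frac_spec hx hi 0).1.1
        have hrel := inv_frac_eq hx hi 0
        have hb : bprod x 1 = x * cfFrac x 1 := by
          rw [bprod_succ]; simp [bprod, cfFrac]
        simp only [cfQden, cfP, pow_one]
        rw [hb]
        have hx0 : cfFrac x 0 = x := rfl
        rw [hx0] at hrel h0
        field_simp at hrel
        linear_combination (-1:ℝ) * hrel
    | succ n ih =>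
      obtain ⟨e1, e2⟩ := ih
      refine ⟨e2, ?_⟩
      have h1 : cfP x (n+2) = cfA x (n+2) * cfP x (n+1) + cfP x n := rfl
      have h2 : cfQden x (n+2) = cfA x (n+2) * cfQden x (n+1) + cfQden x n := rfl
      have hrel := inv_frac_eq hx hi (n+1)
      have hpos := (frac_spec hx hi (n+1)).1.1
      have hb2 : bprod x (n+2) = bprod x (n+1) * cfFrac x (n+2) := bprod_succ (n+1)
      have hb1 : bprod x (n+1) = bprod x n * cfFrac x (n+1) := bprod_succ n
      -- 1/F_{n+1} = a_{n+2} + F_{n+2}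
      have hkey : (1:ℝ) = cfFrac x (n+1) * ((cfA x (n+2) : ℝ) + cfFrac x (n+2)) := by
        rw [← hrel]; field_simp
      show (cfQden x (n+2) : ℝ) * x - cfP x (n+2) = (-1)^(n+2) * bprod x (n+2)
      rw [h1, h2]
      push_cast
      have expand : ((cfA x (n+2) : ℝ) * (cfQden x (n+1)) + cfQden x n) * x -
          ((cfA x (n+2) : ℝ) * (cfP x (n+1)) + cfP x n)
          = (cfA x (n+2) : ℝ) * ((cfQden x (n+1) : ℝ) * x - cfP x (n+1))
            + ((cfQden x n : ℝ) * x - cfP x n) := by ring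
      rw [expand, e1, e2, hb2, hb1]
      linear_combination ((-1:ℝ)^n * bprod x n) * hkey
  exact fun n => (key n).1

lemma one_eq (hx : x ∈ Set.Ioo (0:ℝ) 1) (hi : Irrational x) (n : ℕ) :
    (cfQden x (n+1) : ℝ) * bprod x n + (cfQden x n : ℝ) * bprod x (n+1) = 1 := by
  have e1 := err_eq hx hi n
  have e2 := err_eq hx hi (n+1)
  have hd := det_eq (x := x) n
  have hd' : (cfP x (n+1) : ℝ) * cfQden x n - cfP x n * cfQden x (n+1) = (-1)^n := by
    exact_mod_cast congrArg (fun z : ℤ => (z:ℝ)) hd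
  rcases Nat.even_or_odd n with he | ho
  · rw [he.neg_one_pow] at hd' e1
    rw [(Even.add_one he).neg_one_pow] at e2
    linear_combination (-(cfQden x (n+1):ℝ)) * e1 + (cfQden x n : ℝ) * e2 + hd'
  · rw [ho.neg_one_pow] at hd' e1
    rw [(Odd.add_one ho).neg_one_pow] at e2
    linear_combination (cfQden x (n+1):ℝ) * e1 - (cfQden x n : ℝ) * e2 - hd'

lemma bprod_lt_inv_q (hx : x ∈ Set.Ioo (0:ℝ) 1) (hi : Irrational x) (n : ℕ) :
    (cfQden x (n+1) : ℝ) * bprod x n < 1 := by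
  have h := one_eq hx hi n
  have h2 : (0:ℝ) < (cfQden x n : ℝ) * bprod x (n+1) := by
    have := bprod_pos hx hi (n+1)
    have := q_pos hx hi n
    positivity
  linarith

lemma one_lt_two_q_bprod (hx : x ∈ Set.Ioo (0:ℝ) 1) (hi : Irrational x) (n : ℕ) :
    1 < 2 * (cfQden x (n+1) : ℝ) * bprod x n := by
  have h := one_eq hx hi n
  have hlt := bprod_lt hx hi n
  have hq : (cfQden x n : ℝ) ≤ (cfQden x (n+1) : ℝ) := by
    exact_mod_cast q_mono_succ hx hi n
  have hq1 : (1:ℝ) ≤ cfQden x n := by exact_mod_cast q_pos hx hi n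
  nlinarith [bprod_pos hx hi (n+1)]

lemma best_approx (hx : x ∈ Set.Ioo (0:ℝ) 1) (hi : Irrational x) (n : ℕ) (Q : ℕ) (p : ℤ)
    (hQ1 : 1 ≤ Q) (hQ : Q < cfQden x (n+1)) :
    bprod x n ≤ |(Q : ℝ) * x - p| := by
  obtain ⟨s, hs12, hsn⟩ : ∃ s : ℤ, (s = 1 ∨ s = -1) ∧ ((-1):ℤ)^n = s :=
    ⟨(-1)^n, neg_one_pow_eq_or ℤ n, rfl⟩
  have hs1 : s * s = 1 := by rcases hs12 with h | h <;> simp [h]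
  have hd := det_eq (x := x) n
  rw [hsn] at hd
  have hsr : ((-1):ℝ)^n = (s:ℝ) := by exact_mod_cast congrArg (fun z : ℤ => (z:ℝ)) hsn
  have e1 := err_eq hx hi n
  have e2 := err_eq hx hi (n+1)
  rw [hsr] at e1
  rw [pow_succ, hsr] at e2
  have hex : ∃ a b : ℤ, (a * cfQden x n + b * cfQden x (n+1) = Q) ∧
      ((Q : ℝ) * x - p = (s:ℝ) * ((a:ℝ) * bprod x n - (b:ℝ) * bprod x (n+1))) := by
    refine ⟨s * (Q * cfP x (n+1) - p * cfQden x (n+1)), s * (p * cfQden x n - Q * cfP x n),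
      ?_, ?_⟩
    · linear_combination (s * (Q:ℤ)) * hd + (Q:ℤ) * hs1
    · have hpeq : (s * ((Q:ℤ) * cfP x (n+1) - p * cfQden x (n+1))) * cfP x n
          + (s * (p * cfQden x n - (Q:ℤ) * cfP x n)) * cfP x (n+1) = p := by
        linear_combination (s * p) * hd + p * hs1
      have hQeq : (s * ((Q:ℤ) * cfP x (n+1) - p * cfQden x (n+1))) * cfQden x n
          + (s * (p * cfQden x n - (Q:ℤ) * cfP x n)) * cfQden x (n+1) = Q := by
        linear_combination (s * (Q:ℤ)) * hd + (Q:ℤ) * hs1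
      have hQr := congrArg (fun z : ℤ => (z:ℝ)) hQeq
      have hpr := congrArg (fun z : ℤ => (z:ℝ)) hpeq
      push_cast at hQr hpr
      push_cast
      linear_combination ((s:ℝ) * ((Q:ℝ) * cfP x (n+1) - p * cfQden x (n+1))) * e1
        + ((s:ℝ) * ((p:ℝ) * cfQden x n - Q * cfP x n)) * e2 - x * hQr + hpr
  obtain ⟨a, b, hQeq, key⟩ := hex
  have habs : |(Q : ℝ) * x - p| = |(a:ℝ) * bprod x n - (b:ℝ) * bprod x (n+1)| := by
    rw [key, abs_mul]
    rcases hs12 with h | h <;> simp [h]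
  rw [habs]
  have hB0 := bprod_pos hx hi n
  have hB1 := bprod_pos hx hi (n+1)
  have hBlt := bprod_lt hx hi n
  have hq0 : (1:ℤ) ≤ (cfQden x n : ℤ) := by exact_mod_cast q_pos hx hi n
  have hq1 : (1:ℤ) ≤ (cfQden x (n+1) : ℤ) := by exact_mod_cast q_pos hx hi (n+1)
  have hQlt : (Q:ℤ) < cfQden x (n+1) := by exact_mod_cast hQ
  have hQ1' : (1:ℤ) ≤ (Q:ℤ) := by exact_mod_cast hQ1
  rcases lt_trichotomy b 0 with hbneg | hbzero | hbpos
  · have hapos : 1 ≤ a := by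
      by_contra hcon
      push_neg at hcon
      have ha0 : a ≤ 0 := by omega
      have hc1 : a * (cfQden x n:ℤ) ≤ 0 := mul_nonpos_of_nonpos_of_nonneg ha0 (by omega)
      have hc2 : b * (cfQden x (n+1):ℤ) ≤ -1 := by nlinarith
      linarith
    have h1 : (1:ℝ) ≤ (a:ℝ) := by exact_mod_cast hapos
    have h2 : (b:ℝ) ≤ -1 := by exact_mod_cast (by omega : b ≤ -1)
    have t1 : 1 * bprod x n ≤ (a:ℝ) * bprod x n := mul_le_mul_of_nonneg_right h1 hB0.le
    have t2 : (b:ℝ) * bprod x (n+1) ≤ -1 * bprod x (n+1) := mul_le_mul_of_nonneg_right h2 hB1.le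
    rw [abs_of_pos (show (0:ℝ) < (a:ℝ) * bprod x n - (b:ℝ) * bprod x (n+1) by linarith)]
    linarith
  · rw [hbzero] at hQeq
    have hapos : 1 ≤ a := by
      rcases le_or_gt 1 a with h | h
      · exact h
      · have ha0 : a ≤ 0 := by omega
        have hc1 : a * (cfQden x n:ℤ) ≤ 0 := mul_nonpos_of_nonpos_of_nonneg ha0 (by omega)
        simp only [zero_mul, add_zero] at hQeq
        linarith
    have h1 : (1:ℝ) ≤ (a:ℝ) := by exact_mod_cast hapos
    rw [hbzero]
    push_cast
    have t1 : 1 * bprod x n ≤ (a:ℝ) * bprod x n := mul_le_mul_of_nonneg_right h1 hB0.le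
    rw [abs_of_pos (show (0:ℝ) < (a:ℝ) * bprod x n - 0 * bprod x (n+1) by linarith)]
    linarith
  · have haneg : a ≤ -1 := by
      by_contra hcon
      push_neg at hcon
      have ha0 : 0 ≤ a := by omega
      have hc1 : 0 ≤ a * (cfQden x n:ℤ) := mul_nonneg ha0 (by omega)
      have hc2 : (cfQden x (n+1):ℤ) ≤ b * cfQden x (n+1) := by nlinarith
      linarith
    have h1 : (a:ℝ) ≤ -1 := by exact_mod_cast haneg
    have h2 : (1:ℝ) ≤ (b:ℝ) := by exact_mod_cast (by omega : 1 ≤ b)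
    have t1 : (a:ℝ) * bprod x n ≤ -1 * bprod x n := mul_le_mul_of_nonneg_right h1 hB0.le
    have t2 : (1:ℝ) * bprod x (n+1) ≤ (b:ℝ) * bprod x (n+1) := mul_le_mul_of_nonneg_right h2 hB1.le
    rw [abs_of_neg (show (a:ℝ) * bprod x n - (b:ℝ) * bprod x (n+1) < 0 by linarith)]
    linarith

lemma exists_index (hx : x ∈ Set.Ioo (0:ℝ) 1) (hi : Irrational x) (Q : ℕ) (hQ : 1 ≤ Q) :
    ∃ n, cfQden x n ≤ Q ∧ Q < cfQden x (n+1) := by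
  have hub : ∃ k, Q < cfQden x k := by
    refine ⟨2*Q+2, ?_⟩
    have := q_linear hx hi (2*Q+2)
    omega
  classical
  have hk := Nat.find_spec hub
  have hk0 : Nat.find hub ≠ 0 := by
    intro h
    rw [h] at hk
    simp [cfQden] at hk
    omega
  have hmin := Nat.find_min hub (show Nat.find hub - 1 < Nat.find hub by omega)
  refine ⟨Nat.find hub - 1, by omega, ?_⟩
  have heq : Nat.find hub - 1 + 1 = Nat.find hub := by omega
  rw [heq]
  exact hk

/-- If θ ∈ (0,1) is irrational of David type and α ∈ (0,1) is the irrational number with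
α ≡ 2θ (mod 1), then α is also of David type. -/
theorem david_type_of_double (θ α : ℝ) (hθ : θ ∈ Set.Ioo (0:ℝ) 1) (hθirr : Irrational θ)
    (hD : IsDavidType θ) (hα : α ∈ Set.Ioo (0:ℝ) 1) (hαirr : Irrational α)
    (hmod : α = 2 * θ ∨ α = 2 * θ - 1) : IsDavidType α := by
  obtain ⟨C, hCpos, hev⟩ := hD
  rw [Filter.eventually_atTop] at hev
  obtain ⟨N, hN⟩ := hev
  have hidx : ∀ m : ℕ, ∃ n, cfQden θ n ≤ 2 * cfQden α m ∧ 2 * cfQden α m < cfQden θ (n+1) := by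
    intro m
    exact exists_index hθ hθirr _ (by have := q_pos hα hαirr m; omega)
  choose nm hnm1 hnm2 using hidx
  -- B'_m ≥ Bθ_{nm m}
  have hrepr : ∀ m : ℕ, ∃ p : ℤ, ((2 * cfQden α m : ℕ) : ℝ) * θ - p
      = (cfQden α m : ℝ) * α - cfP α m := by
    intro m
    rcases hmod with h2 | h2
    · exact ⟨cfP α m, by rw [h2]; push_cast; ring⟩
    · exact ⟨(cfP α m : ℤ) + cfQden α m, by rw [h2]; push_cast; ring⟩
  have hBle : ∀ m, bprod θ (nm m) ≤ bprod α m := by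
    intro m
    obtain ⟨p, hp⟩ := hrepr m
    have habs : |(cfQden α m : ℝ) * α - cfP α m| = bprod α m := by
      rw [err_eq hα hαirr m, abs_mul, abs_pow, abs_neg, abs_one, one_pow, one_mul,
        abs_of_pos (bprod_pos hα hαirr m)]
    calc bprod θ (nm m) ≤ |((2 * cfQden α m : ℕ) : ℝ) * θ - p| :=
          best_approx hθ hθirr (nm m) _ p (by have := q_pos hα hαirr m; omega) (hnm2 m)
      _ = bprod α m := by rw [hp, habs]
  have key1 : ∀ m, cfQden α (m+1) < 2 * cfQden θ (nm m + 1) := by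
    intro m
    have h1 : (cfQden α (m+1):ℝ) * bprod α m < 1 := bprod_lt_inv_q hα hαirr m
    have h2 : 1 < 2 * (cfQden θ (nm m + 1):ℝ) * bprod θ (nm m) := one_lt_two_q_bprod hθ hθirr (nm m)
    have h4 := bprod_pos hθ hθirr (nm m)
    have h5 : (cfQden α (m+1):ℝ) * bprod θ (nm m) < (2 * (cfQden θ (nm m + 1):ℝ)) * bprod θ (nm m) := by
      have h6 : (cfQden α (m+1):ℝ) * bprod θ (nm m) ≤ (cfQden α (m+1):ℝ) * bprod α m :=
        mul_le_mul_of_nonneg_left (hBle m) (by positivity)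
      linarith
    have h7 : (cfQden α (m+1):ℝ) < 2 * (cfQden θ (nm m + 1):ℝ) :=
      lt_of_mul_lt_mul_right h5 h4.le
    exact_mod_cast h7
  have key2 : ∀ m, cfA α (m+1) ≤ 4 * (cfA θ (nm m + 1) + 1) := by
    intro m
    have A1 : cfA α (m+1) * cfQden α m ≤ cfQden α (m+1) := a_mul_le hα hαirr m
    have A3 : cfQden θ (nm m + 1) ≤ (cfA θ (nm m + 1) + 1) * cfQden θ (nm m) :=
      q_succ_le hθ hθirr (nm m)
    have A4 : cfQden θ (nm m) ≤ 2 * cfQden α m := hnm1 m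
    have chain : cfA α (m+1) * cfQden θ (nm m) < (4 * (cfA θ (nm m + 1) + 1)) * cfQden θ (nm m) := by
      calc cfA α (m+1) * cfQden θ (nm m) ≤ cfA α (m+1) * (2 * cfQden α m) :=
            Nat.mul_le_mul (le_refl _) A4
        _ = 2 * (cfA α (m+1) * cfQden α m) := by ring
        _ ≤ 2 * cfQden α (m+1) := Nat.mul_le_mul (le_refl _) A1
        _ < 2 * (2 * cfQden θ (nm m + 1)) := by have := key1 m; omega
        _ = 4 * cfQden θ (nm m + 1) := by ring
        _ ≤ 4 * ((cfA θ (nm m + 1) + 1) * cfQden θ (nm m)) := Nat.mul_le_mul (le_refl _) A3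
        _ = (4 * (cfA θ (nm m + 1) + 1)) * cfQden θ (nm m) := by ring
    exact le_of_lt (lt_of_mul_lt_mul_right chain (Nat.zero_le _))
  have key3 : ∀ m, nm (m+1) ≤ nm m + 4 := by
    intro m
    by_contra hcon
    push_neg at hcon
    have hmono : cfQden θ (nm m + 5) ≤ cfQden θ (nm (m+1)) := q_mono hθ hθirr (by omega)
    have h5 : 5 * cfQden θ (nm m + 1) ≤ cfQden θ (nm m + 5) := q_five hθ hθirr (nm m)
    have h6 := hnm1 (m+1)
    have h7 := key1 m
    have h8 := q_pos hθ hθirr (nm m + 1)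
    omega
  have key4 : ∀ m, nm m ≤ nm 0 + 4*m := by
    intro m
    induction m with
    | zero => omega
    | succ m ih => have := key3 m; omega
  have key5 : ∀ m, m < cfQden θ (nm m + 1) := by
    intro m
    have h1 := q_linear hα hαirr m
    have h2 := hnm2 m
    omega
  have key6 : ∀ m, cfQden θ N ≤ m → N ≤ nm m + 1 := by
    intro m hm
    by_contra hcon
    push_neg at hcon
    have : cfQden θ (nm m + 1) ≤ cfQden θ N := q_mono hθ hθirr (by omega)
    have := key5 m
    omega
  refine ⟨3*C + 3, by positivity, ?_⟩
  rw [Filter.eventually_atTop]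
  refine ⟨max (cfQden θ N) (nm 0 + 1) + 1, ?_⟩
  intro j hj
  obtain ⟨m, rfl⟩ : ∃ m, j = m + 1 := ⟨j - 1, by omega⟩
  have hmax1 : cfQden θ N ≤ m := by
    have := le_max_left (cfQden θ N) (nm 0 + 1); omega
  have hmax2 : nm 0 + 1 ≤ m := by
    have := le_max_right (cfQden θ N) (nm 0 + 1); omega
  have ha1 : 1 ≤ cfA θ (nm m + 1) := one_le_cfA hθ hθirr (nm m)
  have ha1' : 1 ≤ cfA α (m+1) := one_le_cfA hα hαirr m
  have hANat : cfA α (m+1) ≤ 8 * cfA θ (nm m + 1) := by have := key2 m; omega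
  have hpos1 : (0:ℝ) < (cfA α (m+1) : ℝ) := by exact_mod_cast Nat.pos_of_ne_zero (by omega)
  have hpos2 : (0:ℝ) < (cfA θ (nm m + 1) : ℝ) := by exact_mod_cast Nat.pos_of_ne_zero (by omega)
  have hlog1 : Real.log (cfA α (m+1)) ≤ Real.log (8 * (cfA θ (nm m + 1) : ℝ)) :=
    (Real.log_le_log_iff hpos1 (by linarith)).2 (by exact_mod_cast hANat)
  have hlog2 : Real.log (8 * (cfA θ (nm m + 1) : ℝ))
      = Real.log 8 + Real.log (cfA θ (nm m + 1)) :=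
    Real.log_mul (by norm_num) (by exact_mod_cast (by omega : cfA θ (nm m + 1) ≠ 0))
  have hlog3 : Real.log (cfA θ (nm m + 1)) ≤ C * Real.sqrt ((nm m + 1 : ℕ) : ℝ) :=
    hN _ (key6 m hmax1)
  have hsqrtle : Real.sqrt ((nm m + 1 : ℕ) : ℝ) ≤ Real.sqrt 5 * Real.sqrt ((m:ℝ)+1) := by
    rw [← Real.sqrt_mul (by norm_num : (0:ℝ) ≤ 5)]
    apply Real.sqrt_le_sqrt
    have hn : (nm m : ℝ) ≤ (nm 0 : ℝ) + 4*(m:ℝ) := by exact_mod_cast key4 m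
    have hm' : (nm 0 : ℝ) + 1 ≤ (m:ℝ) := by exact_mod_cast hmax2
    push_cast
    linarith
  have snn : (0:ℝ) ≤ Real.sqrt ((m:ℝ)+1) := Real.sqrt_nonneg _
  have h1le : (1:ℝ) ≤ Real.sqrt ((m:ℝ)+1) :=
    Real.one_le_sqrt.2 (by linarith [Nat.cast_nonneg (α := ℝ) m])
  have hs5 : Real.sqrt 5 ≤ 3 := by
    nlinarith [Real.sq_sqrt (show (0:ℝ) ≤ 5 by norm_num), Real.sqrt_nonneg 5]
  have hlog8 : Real.log 8 ≤ 3 := by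
    have h2 := Real.log_two_lt_d9
    rw [show (8:ℝ) = 2^3 by norm_num, Real.log_pow]
    push_cast
    linarith
  have hC := mul_le_mul_of_nonneg_left hsqrtle hCpos.le
  have t0 : Real.sqrt 5 * Real.sqrt ((m:ℝ)+1) ≤ 3 * Real.sqrt ((m:ℝ)+1) :=
    mul_le_mul_of_nonneg_right hs5 snn
  have t1 : C * (Real.sqrt 5 * Real.sqrt ((m:ℝ)+1)) ≤ C * (3 * Real.sqrt ((m:ℝ)+1)) :=
    mul_le_mul_of_nonneg_left t0 hCpos.le
  have hcast : ((m+1 : ℕ) : ℝ) = (m:ℝ)+1 := by push_cast; ring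
  rw [hcast]
  linarith
end

section
/- There exists a constant C > 0 such that for every measurable set E ⊂ ℂ, the spherical area of Φ⁻¹(E) is at most C times the square root of the spherical area of E, where Φ(z) = z² and areas are measured with respect to the spherical metric |dz|/(1+|z|²). -/
open MeasureTheory Set Metric Complex

/-- The spherical area of a measurable set E ⊂ ℂ, i.e. ∫_E (1+|z|²)⁻² dA. -/
noncomputable def sphericalArea (E : Set ℂ) : ENNReal :=
  ∫⁻ z in E, ENNReal.ofReal (1 / (1 + ‖z‖ ^ 2) ^ 2)

/- Auxiliary densities -/
noncomputable def fD (w : ℂ) : ENNReal := ENNReal.ofReal (1/(4*‖w‖*(1+‖w‖)^2))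
noncomputable def gD (w : ℂ) : ENNReal := ENNReal.ofReal (1/(1+‖w‖^2)^2)

lemma gD_meas : Measurable gD := by unfold gD; fun_prop

noncomputable def sphKappa : ENNReal := (volume : Measure ℂ).toSphere univ

lemma sphKappa_ne_top : sphKappa ≠ ⊤ := measure_ne_top _ _

lemma lintegral_norm_complex (f : ℝ → ENNReal) (hf : Measurable f) :
    ∫⁻ z : ℂ, f ‖z‖ = sphKappa * ∫⁻ y in Ioi (0:ℝ), ENNReal.ofReal y * f y := by
  have h0 : ∫⁻ z : ℂ, f ‖z‖ = ∫⁻ z : ℂ in ({0}ᶜ : Set ℂ), f ‖z‖ := by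
    rw [restrict_compl_singleton]
  rw [h0, ← lintegral_subtype_comap (measurableSet_singleton (0:ℂ)).compl]
  have hmp := Measure.measurePreserving_homeomorphUnitSphereProd (volume : Measure ℂ)
  have hg : Measurable fun p : sphere (0:ℂ) 1 × Ioi (0:ℝ) => f p.2.1 :=
    (hf.comp measurable_subtype_coe).comp measurable_snd
  have key : ∫⁻ x : ({0}ᶜ : Set ℂ), f ‖(x:ℂ)‖ ∂(Measure.comap Subtype.val volume)
      = ∫⁻ p : sphere (0:ℂ) 1 × Ioi (0:ℝ), f p.2.1
        ∂((volume : Measure ℂ).toSphere.prod (Measure.volumeIoiPow (Module.finrank ℝ ℂ - 1))) := by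
    rw [← hmp.lintegral_comp hg]
    exact lintegral_congr fun x => by rw [homeomorphUnitSphereProd_apply_snd_coe]
  rw [key, lintegral_prod _ hg.aemeasurable]
  simp only [lintegral_const]
  have h1 : ∫⁻ y : Ioi (0:ℝ), f y.1 ∂(Measure.volumeIoiPow (Module.finrank ℝ ℂ - 1))
      = ∫⁻ y in Ioi (0:ℝ), ENNReal.ofReal y * f y := by
    rw [Measure.volumeIoiPow,
      lintegral_withDensity_eq_lintegral_mul _
        (f := fun r : Ioi (0:ℝ) => ENNReal.ofReal (r.1 ^ (Module.finrank ℝ ℂ - 1)))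
        (by fun_prop)
        (g := fun y : Ioi (0:ℝ) => f y.1) (hf.comp measurable_subtype_coe)]
    simp only [Pi.mul_apply]
    rw [lintegral_subtype_comap measurableSet_Ioi
      (fun y => ENNReal.ofReal (y ^ (Module.finrank ℝ ℂ - 1)) * f y)]
    simp [Complex.finrank_real_complex]
  rw [h1, mul_comm]
  rfl

lemma ball_bound {r : ℝ} (hr : 0 < r) :
    ∫⁻ w in ball (0:ℂ) r, fD w ≤ sphKappa * ENNReal.ofReal (r/4) := by
  set F : ℝ → ENNReal := (Ioo (0:ℝ) r).indicator (fun y => ENNReal.ofReal (1/(4*y))) with hF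
  have hFmeas : Measurable F := by
    exact (Measurable.ennreal_ofReal
      (measurable_const.div (measurable_id.const_mul 4))).indicator measurableSet_Ioo
  have step1 : ∫⁻ w in ball (0:ℂ) r, fD w ≤ ∫⁻ w : ℂ, F ‖w‖ := by
    refine le_trans (setLIntegral_mono' measurableSet_ball ?_) (setLIntegral_le_lintegral _ _)
    intro w hw
    rcases eq_or_ne w 0 with h0 | h0
    · simp [fD, h0]
    · have hnorm : ‖w‖ ∈ Ioo (0:ℝ) r := ⟨norm_pos_iff.2 h0, mem_ball_zero_iff.1 hw⟩
      rw [hF, indicator_of_mem hnorm]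
      apply ENNReal.ofReal_le_ofReal
      have h1 : (0:ℝ) < 4 * ‖w‖ := by nlinarith [hnorm.1]
      have h2 : (1:ℝ) ≤ (1+‖w‖)^2 := by nlinarith [norm_nonneg w]
      calc 1/(4*‖w‖*(1+‖w‖)^2) ≤ 1/(4*‖w‖*1) := by
            apply one_div_le_one_div_of_le (by nlinarith [hnorm.1])
            nlinarith
        _ = 1/(4*‖w‖) := by ring_nf
  have step2 : ∫⁻ w : ℂ, F ‖w‖ = sphKappa * ∫⁻ y in Ioi (0:ℝ), ENNReal.ofReal y * F y :=
    lintegral_norm_complex F hFmeas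
  have step3 : ∫⁻ y in Ioi (0:ℝ), ENNReal.ofReal y * F y = ENNReal.ofReal (r/4) := by
    have hind : (fun y => ENNReal.ofReal y * F y)
        = (Ioo (0:ℝ) r).indicator (fun y => ENNReal.ofReal y * ENNReal.ofReal (1/(4*y))) := by
      funext y
      by_cases hy : y ∈ Ioo (0:ℝ) r <;> simp [hF, hy, indicator_of_mem, indicator_of_notMem]
    rw [hind, lintegral_indicator measurableSet_Ioo, Measure.restrict_restrict measurableSet_Ioo,
      inter_eq_self_of_subset_left Ioo_subset_Ioi_self]
    have : ∀ y ∈ Ioo (0:ℝ) r,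
        ENNReal.ofReal y * ENNReal.ofReal (1/(4*y)) = ENNReal.ofReal (1/4) := by
      intro y hy
      rw [← ENNReal.ofReal_mul hy.1.le]
      congr 1
      have hy0 : y ≠ 0 := hy.1.ne'
      field_simp
    rw [setLIntegral_congr_fun measurableSet_Ioo this, setLIntegral_const,
      Real.volume_Ioo, ← ENNReal.ofReal_mul (by norm_num)]
    congr 1
    ring
  rw [step2, step3] at step1
  exact step1

lemma tail_bound {R : ℝ} (hR : 0 < R) :
    ∫⁻ w in (closedBall (0:ℂ) R)ᶜ, fD w ≤ sphKappa * ENNReal.ofReal (1/(4*R)) := by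
  set F : ℝ → ENNReal := (Ioi R).indicator (fun y => ENNReal.ofReal (1/(4*y^3))) with hF
  have hFmeas : Measurable F := by
    exact (Measurable.ennreal_ofReal
      (measurable_const.div ((measurable_id.pow_const 3).const_mul 4))).indicator measurableSet_Ioi
  have step1 : ∫⁻ w in (closedBall (0:ℂ) R)ᶜ, fD w ≤ ∫⁻ w : ℂ, F ‖w‖ := by
    refine le_trans (setLIntegral_mono' measurableSet_closedBall.compl ?_)
      (setLIntegral_le_lintegral _ _)
    intro w hw
    have hnorm : ‖w‖ ∈ Ioi R := by
      simpa [mem_closedBall_zero_iff, not_le] using hw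
    rw [hF, indicator_of_mem hnorm]
    apply ENNReal.ofReal_le_ofReal
    have hw0 : (0:ℝ) < ‖w‖ := hR.trans hnorm
    apply one_div_le_one_div_of_le (by positivity)
    nlinarith [sq_nonneg ‖w‖]
  have step2 := lintegral_norm_complex F hFmeas
  have step3 : ∫⁻ y in Ioi (0:ℝ), ENNReal.ofReal y * F y ≤ ENNReal.ofReal (1/(4*R)) := by
    have hind : (fun y => ENNReal.ofReal y * F y)
        = (Ioi R).indicator (fun y => ENNReal.ofReal y * ENNReal.ofReal (1/(4*y^3))) := by
      funext y
      by_cases hy : y ∈ Ioi R <;> simp [hF, hy, indicator_of_mem, indicator_of_notMem]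
    rw [hind, lintegral_indicator measurableSet_Ioi, Measure.restrict_restrict measurableSet_Ioi,
      inter_eq_self_of_subset_left (Ioi_subset_Ioi hR.le)]
    have hcongr : ∀ y ∈ Ioi R,
        ENNReal.ofReal y * ENNReal.ofReal (1/(4*y^3)) = ENNReal.ofReal ((1/4) * y^(-2:ℝ)) := by
      intro y hy
      have hy0 : 0 < y := hR.trans hy
      rw [← ENNReal.ofReal_mul hy0.le]
      congr 1
      rw [Real.rpow_neg hy0.le, show (2:ℝ) = ((2:ℕ):ℝ) by norm_num, Real.rpow_natCast]
      have hy' : y ≠ 0 := hy0.ne'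
      field_simp
    rw [setLIntegral_congr_fun measurableSet_Ioi hcongr]
    have hint : IntegrableOn (fun y : ℝ => (1/4) * y^(-2:ℝ)) (Ioi R) :=
      (integrableOn_Ioi_rpow_of_lt (by norm_num) hR).const_mul _
    rw [← ofReal_integral_eq_lintegral_ofReal hint]
    · rw [MeasureTheory.integral_const_mul, integral_Ioi_rpow_of_lt (by norm_num) hR]
      apply ENNReal.ofReal_le_ofReal
      rw [show (-2:ℝ)+1 = -1 by norm_num, Real.rpow_neg hR.le, Real.rpow_one]
      rw [div_neg, neg_div, neg_neg]
      rw [one_div, div_one]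
      rw [one_div, mul_inv]
    · filter_upwards [ae_restrict_mem measurableSet_Ioi] with y hy
      have : 0 < y := hR.trans hy
      positivity
  calc ∫⁻ w in (closedBall (0:ℂ) R)ᶜ, fD w ≤ ∫⁻ w : ℂ, F ‖w‖ := step1
    _ = sphKappa * ∫⁻ y in Ioi (0:ℝ), ENNReal.ofReal y * F y := step2
    _ ≤ sphKappa * ENNReal.ofReal (1/(4*R)) := mul_le_mul_right step3 _

lemma annulus_pointwise {r : ℝ} (hr : 0 < r) {w : ℂ} (h1 : r ≤ ‖w‖) (h2 : ‖w‖ ≤ 1/r) :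
    fD w ≤ ENNReal.ofReal (1/r) * gD w := by
  unfold fD gD
  rw [← ENNReal.ofReal_mul (by positivity)]
  apply ENNReal.ofReal_le_ofReal
  set t := ‖w‖ with ht
  have ht0 : 0 < t := hr.trans_le h1
  have hrt : r * t ≤ 1 := by
    rw [mul_comm]
    exact (le_div_iff₀ hr).1 h2
  have e1 : (1+t^2) ≤ (1+t)^2 := by nlinarith
  have e2 : r*(1+t^2) ≤ 2*t := by
    nlinarith [mul_le_mul_of_nonneg_right hrt ht0.le]
  have key : r * (1+t^2)^2 ≤ 4*t*(1+t)^2 := by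
    nlinarith [mul_le_mul e2 e1 (by positivity) (by positivity), sq_nonneg (1+t), ht0]
  have h4 : (1/r) * (1/(1+t^2)^2) = 1/(r*(1+t^2)^2) := by
    field_simp
  rw [h4]
  apply one_div_le_one_div_of_le
  · positivity
  · exact key

lemma total_fD : ∫⁻ w : ℂ, fD w ≤ sphKappa * ENNReal.ofReal (1/2) := by
  have hcover : (univ : Set ℂ) ⊆
      ball (0:ℂ) 1 ∪ (sphere (0:ℂ) 1 ∪ (closedBall (0:ℂ) 1)ᶜ) := by
    intro w _
    rcases lt_trichotomy ‖w‖ 1 with h | h | h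
    · exact Or.inl (mem_ball_zero_iff.2 h)
    · exact Or.inr (Or.inl (mem_sphere_zero_iff_norm.2 h))
    · exact Or.inr (Or.inr fun hc => absurd (mem_closedBall_zero_iff.1 hc) (not_le.2 h))
  have hsphere : ∫⁻ w in sphere (0:ℂ) 1, fD w = 0 := by
    rw [setLIntegral_measure_zero _ _ (Measure.addHaar_sphere volume 0 1)]
  calc ∫⁻ w : ℂ, fD w = ∫⁻ w in (univ : Set ℂ), fD w := by rw [Measure.restrict_univ]
    _ ≤ ∫⁻ w in ball (0:ℂ) 1 ∪ (sphere (0:ℂ) 1 ∪ (closedBall (0:ℂ) 1)ᶜ), fD w :=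
        lintegral_mono_set hcover
    _ ≤ (∫⁻ w in ball (0:ℂ) 1, fD w) +
        ((∫⁻ w in sphere (0:ℂ) 1, fD w) + ∫⁻ w in (closedBall (0:ℂ) 1)ᶜ, fD w) :=
        le_trans (lintegral_union_le _ _ _) (add_le_add_right (lintegral_union_le _ _ _) _)
    _ ≤ sphKappa * ENNReal.ofReal (1/4) + (0 + sphKappa * ENNReal.ofReal (1/(4*1))) := by
        exact add_le_add (ball_bound one_pos) (add_le_add hsphere.le (tail_bound one_pos))
    _ = sphKappa * ENNReal.ofReal (1/2) := by
        rw [zero_add, ← mul_add, ← ENNReal.ofReal_add (by norm_num) (by norm_num)]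
        norm_num

lemma key3 (E : Set ℂ) (hE : MeasurableSet E) :
    ∫⁻ w in E, fD w ≤
      ENNReal.ofReal (sphKappa.toReal/2 + 1) * (∫⁻ w in E, gD w) ^ ((1:ℝ)/2) := by
  set s := ∫⁻ w in E, gD w with hs
  set k := sphKappa.toReal with hk
  have hk0 : 0 ≤ k := ENNReal.toReal_nonneg
  have hκ : sphKappa = ENNReal.ofReal k := (ENNReal.ofReal_toReal sphKappa_ne_top).symm
  have decomp : ∀ ρ : ℝ, 0 < ρ →
      ∫⁻ w in E, fD w ≤ sphKappa * ENNReal.ofReal (ρ/4) +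
        (ENNReal.ofReal (1/ρ) * s + sphKappa * ENNReal.ofReal (ρ/4)) := by
    intro ρ h0
    set Mid := closedBall (0:ℂ) (1/ρ) \ ball (0:ℂ) ρ with hMid
    have hsub : E ⊆ (ball (0:ℂ) ρ) ∪ ((E ∩ Mid) ∪ (closedBall (0:ℂ) (1/ρ))ᶜ) := by
      intro w hw
      by_cases hb : ‖w‖ < ρ
      · exact Or.inl (mem_ball_zero_iff.2 hb)
      · by_cases hc : ‖w‖ ≤ 1/ρ
        · exact Or.inr (Or.inl ⟨hw, mem_closedBall_zero_iff.2 hc,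
            fun h => hb (mem_ball_zero_iff.1 h)⟩)
        · exact Or.inr (Or.inr fun h => hc (mem_closedBall_zero_iff.1 h))
    have hmid : ∫⁻ w in E ∩ Mid, fD w ≤ ENNReal.ofReal (1/ρ) * s := by
      have hmeas : MeasurableSet (E ∩ Mid) :=
        hE.inter (measurableSet_closedBall.diff measurableSet_ball)
      calc ∫⁻ w in E ∩ Mid, fD w ≤ ∫⁻ w in E ∩ Mid, ENNReal.ofReal (1/ρ) * gD w := by
            refine setLIntegral_mono' hmeas fun w hw => ?_
            have h1 : ρ ≤ ‖w‖ := le_of_not_gt fun hc => hw.2.2 (mem_ball_zero_iff.2 hc)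
            have h2 : ‖w‖ ≤ 1/ρ := mem_closedBall_zero_iff.1 hw.2.1
            exact annulus_pointwise h0 h1 h2
        _ = ENNReal.ofReal (1/ρ) * ∫⁻ w in E ∩ Mid, gD w := lintegral_const_mul _ gD_meas
        _ ≤ ENNReal.ofReal (1/ρ) * s :=
            mul_le_mul_right (lintegral_mono_set inter_subset_left) _
    have htail : ∫⁻ w in (closedBall (0:ℂ) (1/ρ))ᶜ, fD w ≤ sphKappa * ENNReal.ofReal (ρ/4) := by
      have h := tail_bound (R := 1/ρ) (by positivity)
      have heq : (1:ℝ)/(4*(1/ρ)) = ρ/4 := by field_simp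
      rwa [heq] at h
    calc ∫⁻ w in E, fD w
        ≤ ∫⁻ w in (ball (0:ℂ) ρ) ∪ ((E ∩ Mid) ∪ (closedBall (0:ℂ) (1/ρ))ᶜ), fD w :=
          lintegral_mono_set hsub
      _ ≤ (∫⁻ w in ball (0:ℂ) ρ, fD w) +
          ((∫⁻ w in E ∩ Mid, fD w) + ∫⁻ w in (closedBall (0:ℂ) (1/ρ))ᶜ, fD w) :=
          le_trans (lintegral_union_le _ _ _) (add_le_add_right (lintegral_union_le _ _ _) _)
      _ ≤ sphKappa * ENNReal.ofReal (ρ/4) +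
          (ENNReal.ofReal (1/ρ) * s + sphKappa * ENNReal.ofReal (ρ/4)) :=
          add_le_add (ball_bound h0) (add_le_add hmid htail)
  rcases eq_or_ne s 0 with hs0 | hs0
  · have hE0 : volume E = 0 := by
      have h1 : gD =ᵐ[volume.restrict E] 0 := (lintegral_eq_zero_iff gD_meas).1 hs0
      have h2 : volume.restrict E {w | gD w ≠ 0} = 0 := h1
      have h3 : {w : ℂ | gD w ≠ 0} = univ := by
        ext w
        simp only [mem_setOf_eq, mem_univ, iff_true]
        exact ne_of_gt (by unfold gD; exact ENNReal.ofReal_pos.2 (by positivity))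
      rw [h3, Measure.restrict_apply_univ] at h2
      exact h2
    rw [setLIntegral_measure_zero _ _ hE0]
    exact zero_le
  rcases eq_or_ne s ⊤ with hstop | hstop
  · rw [hstop, ENNReal.top_rpow_of_pos (by norm_num), ENNReal.mul_top (by
      simp only [ne_eq, ENNReal.ofReal_eq_zero, not_le]
      linarith)]
    exact le_top
  have hst : s = ENNReal.ofReal s.toReal := (ENNReal.ofReal_toReal hstop).symm
  have ht0 : 0 < s.toReal := ENNReal.toReal_pos hs0 hstop
  set t := s.toReal with htdef
  rcases le_or_gt 1 t with h1t | h1t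
  · have hs1 : (1:ENNReal) ≤ s := by
      rw [hst, ← ENNReal.ofReal_one]
      exact ENNReal.ofReal_le_ofReal h1t
    have hrp : (1:ENNReal) ≤ s ^ ((1:ℝ)/2) := by
      calc (1:ENNReal) = 1 ^ ((1:ℝ)/2) := (ENNReal.one_rpow _).symm
        _ ≤ s ^ ((1:ℝ)/2) := ENNReal.rpow_le_rpow hs1 (by norm_num)
    calc ∫⁻ w in E, fD w ≤ ∫⁻ w : ℂ, fD w := setLIntegral_le_lintegral _ _
      _ ≤ sphKappa * ENNReal.ofReal (1/2) := total_fD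
      _ ≤ ENNReal.ofReal (k/2 + 1) * 1 := by
          rw [mul_one, hκ, ← ENNReal.ofReal_mul hk0]
          exact ENNReal.ofReal_le_ofReal (by linarith)
      _ ≤ ENNReal.ofReal (k/2 + 1) * s ^ ((1:ℝ)/2) := mul_le_mul_right hrp _
  · set ρ := Real.sqrt t with hρ
    have hρ0 : 0 < ρ := Real.sqrt_pos.2 ht0
    have key := decomp ρ hρ0
    have hcompute : sphKappa * ENNReal.ofReal (ρ/4) +
        (ENNReal.ofReal (1/ρ) * s + sphKappa * ENNReal.ofReal (ρ/4))
        = ENNReal.ofReal (k*(ρ/4) + (t/ρ + k*(ρ/4))) := by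
      rw [hκ, hst, ← ENNReal.ofReal_mul hk0, ← ENNReal.ofReal_mul (by positivity),
        ← ENNReal.ofReal_add (by positivity) (by positivity),
        ← ENNReal.ofReal_add (by positivity) (by positivity)]
      congr 2
      field_simp
    have hsqrt : t/ρ = ρ := Real.div_sqrt
    have hfinal : k*(ρ/4) + (t/ρ + k*(ρ/4)) ≤ (k/2 + 1) * ρ := by
      rw [hsqrt]; ring_nf; linarith
    have hrhs : ENNReal.ofReal (k/2 + 1) * s ^ ((1:ℝ)/2)
        = ENNReal.ofReal ((k/2 + 1) * ρ) := by
      rw [hst, ENNReal.ofReal_rpow_of_pos ht0, ← ENNReal.ofReal_mul (by linarith)]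
      congr 1
      rw [hρ, Real.sqrt_eq_rpow]
    calc ∫⁻ w in E, fD w
        ≤ sphKappa * ENNReal.ofReal (ρ/4) +
          (ENNReal.ofReal (1/ρ) * s + sphKappa * ENNReal.ofReal (ρ/4)) := key
      _ = ENNReal.ofReal (k*(ρ/4) + (t/ρ + k*(ρ/4))) := hcompute
      _ ≤ ENNReal.ofReal ((k/2 + 1) * ρ) := ENNReal.ofReal_le_ofReal hfinal
      _ = ENNReal.ofReal (k/2 + 1) * s ^ ((1:ℝ)/2) := hrhs.symm

/- Change of variables part -/
noncomputable def pD (z : ℂ) : ENNReal := ENNReal.ofReal (1/(1+‖z‖^2)^2)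

noncomputable def sqDeriv (z : ℂ) : ℂ →L[ℝ] ℂ :=
  (ContinuousLinearMap.smulRight (1 : ℂ →L[ℂ] ℂ) (2*z)).restrictScalars ℝ

lemma hasFDeriv_sq (z : ℂ) : HasFDerivAt (fun z : ℂ => z^2) (sqDeriv z) z := by
  have h := (hasDerivAt_pow 2 z).hasFDerivAt.restrictScalars ℝ
  simpa [sqDeriv, ContinuousLinearMap.smulRight_one_eq_toSpanSingleton] using h

lemma det_sqDeriv (z : ℂ) : (sqDeriv z).det = Complex.normSq (2*z) := by
  have h : (sqDeriv z).toLinearMap = Algebra.lmul ℝ ℂ (2*z) := by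
    ext w
    simp [sqDeriv, Algebra.lmul, mul_comm]
  show LinearMap.det (sqDeriv z).toLinearMap = _
  rw [h, ← Algebra.norm_apply, Algebra.norm_complex_apply]

lemma line_null : volume {z : ℂ | z.re = 0} = 0 := by
  have h : {z : ℂ | z.re = 0} = Complex.measurableEquivRealProd ⁻¹' ({0} ×ˢ univ) := by
    ext z
    simp [Complex.measurableEquivRealProd, Complex.equivRealProd]
  rw [h, Complex.volume_preserving_equiv_real_prod.measure_preimage
    (((measurableSet_singleton 0).prod MeasurableSet.univ)).nullMeasurableSet,
    Measure.volume_eq_prod, Measure.prod_prod, Real.volume_singleton, zero_mul]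

lemma cov_half (E : Set ℂ) (hE : MeasurableSet E) (S : Set ℂ) (hS : MeasurableSet S)
    (hS0 : ∀ z ∈ S, z ≠ 0) (hinj : InjOn (fun z : ℂ => z^2) S) :
    ∫⁻ z in S, ((fun z : ℂ => z^2) ⁻¹' E).indicator pD z ≤ ∫⁻ w in E, fD w := by
  set G : ℂ → ENNReal := E.indicator fD with hG
  have hder : ∀ z ∈ S, HasFDerivWithinAt (fun z : ℂ => z^2) (sqDeriv z) S z :=
    fun z _ => (hasFDeriv_sq z).hasFDerivWithinAt
  have cov := lintegral_image_eq_lintegral_abs_det_fderiv_mul volume hS hder hinj G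
  have hcongr : ∀ z ∈ S, ENNReal.ofReal |(sqDeriv z).det| * G ((fun z : ℂ => z^2) z)
      = ((fun z : ℂ => z^2) ⁻¹' E).indicator pD z := by
    intro z hz
    have hz0 : z ≠ 0 := hS0 z hz
    have hnz : (0:ℝ) < ‖z‖ := norm_pos_iff.2 hz0
    rw [det_sqDeriv]
    by_cases hmem : z^2 ∈ E
    · rw [hG, indicator_of_mem hmem, indicator_of_mem (by exact hmem)]
      unfold fD pD
      rw [_root_.abs_of_nonneg (normSq_nonneg _), ← ENNReal.ofReal_mul (normSq_nonneg _)]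
      congr 1
      have hnormsq : Complex.normSq (2*z) = 4*‖z‖^2 := by
        rw [Complex.normSq_eq_norm_sq, norm_mul, Complex.norm_ofNat]
        ring
      have hsq : ‖z^2‖ = ‖z‖^2 := by rw [norm_pow]
      rw [hnormsq, hsq]
      have hz2 : (0:ℝ) < ‖z‖^2 := pow_pos hnz 2
      have hd : (0:ℝ) < 4*‖z‖^2*(1+‖z‖^2)^2 := by
        apply mul_pos (by linarith) (by positivity)
      rw [mul_one_div, div_eq_div_iff hd.ne' (by positivity : ((1:ℝ)+‖z‖^2)^2 ≠ 0)]
      ring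
    · rw [hG, indicator_of_notMem hmem, indicator_of_notMem (by exact hmem), mul_zero]
  rw [setLIntegral_congr_fun hS hcongr] at cov
  rw [← cov]
  calc ∫⁻ x in (fun z : ℂ => z^2) '' S, G x ≤ ∫⁻ x, G x := setLIntegral_le_lintegral _ _
    _ = ∫⁻ w in E, fD w := lintegral_indicator hE fD

lemma preimage_bound (E : Set ℂ) (hE : MeasurableSet E) :
    ∫⁻ z in ((fun z : ℂ => z^2) ⁻¹' E), pD z ≤ 2 * ∫⁻ w in E, fD w := by
  set A := (fun z : ℂ => z^2) ⁻¹' E with hA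
  have hAm : MeasurableSet A := (by fun_prop : Measurable (fun z : ℂ => z^2)) hE
  set Sp := {z : ℂ | 0 < z.re} with hSp
  set Sm := {z : ℂ | z.re < 0} with hSm
  set L := {z : ℂ | z.re = 0} with hL
  have hSpm : MeasurableSet Sp := measurableSet_lt measurable_const Complex.measurable_re
  have hSmm : MeasurableSet Sm := measurableSet_lt Complex.measurable_re measurable_const
  have hinj : ∀ (T : Set ℂ), (∀ a ∈ T, ∀ b ∈ T, 0 < a.re * b.re) →
      InjOn (fun z : ℂ => z^2) T := by
    intro T hT a ha b hb hab
    simp only at hab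
    have h : (a - b) * (a + b) = 0 := by linear_combination hab
    rcases mul_eq_zero.1 h with h' | h'
    · exact sub_eq_zero.1 h'
    · exfalso
      have hab' : a = -b := eq_neg_of_add_eq_zero_left h'
      have hre : a.re = -b.re := by rw [hab', Complex.neg_re]
      have hpos := hT a ha b hb
      have heq : a.re * b.re = -(b.re^2) := by rw [hre]; ring
      linarith [sq_nonneg b.re]
  have hinjp : InjOn (fun z : ℂ => z^2) Sp := by
    refine hinj Sp fun a ha b hb => mul_pos ha hb
  have hinjm : InjOn (fun z : ℂ => z^2) Sm := by
    refine hinj Sm fun a ha b hb => mul_pos_of_neg_of_neg ha hb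
  have hS0p : ∀ z ∈ Sp, z ≠ 0 := by
    intro z hz h0
    rw [h0] at hz
    simp [hSp] at hz
  have hS0m : ∀ z ∈ Sm, z ≠ 0 := by
    intro z hz h0
    rw [h0] at hz
    simp [hSm] at hz
  have hcover : (univ : Set ℂ) ⊆ Sp ∪ (Sm ∪ L) := by
    intro z _
    rcases lt_trichotomy z.re 0 with h | h | h
    · exact Or.inr (Or.inl h)
    · exact Or.inr (Or.inr h)
    · exact Or.inl h
  calc ∫⁻ z in A, pD z = ∫⁻ z, A.indicator pD z := (lintegral_indicator hAm pD).symm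
    _ = ∫⁻ z in (univ : Set ℂ), A.indicator pD z := by rw [Measure.restrict_univ]
    _ ≤ ∫⁻ z in Sp ∪ (Sm ∪ L), A.indicator pD z := lintegral_mono_set hcover
    _ ≤ (∫⁻ z in Sp, A.indicator pD z) +
        ((∫⁻ z in Sm, A.indicator pD z) + ∫⁻ z in L, A.indicator pD z) :=
        le_trans (lintegral_union_le _ _ _) (add_le_add_right (lintegral_union_le _ _ _) _)
    _ ≤ (∫⁻ w in E, fD w) + ((∫⁻ w in E, fD w) + 0) := by
        refine add_le_add (cov_half E hE Sp hSpm hS0p hinjp)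
          (add_le_add (cov_half E hE Sm hSmm hS0m hinjm) ?_)
        exact le_of_eq (setLIntegral_measure_zero _ _ line_null)
    _ = 2 * ∫⁻ w in E, fD w := by rw [add_zero, two_mul]

/-- There is C > 0 such that for every measurable E ⊂ ℂ, the spherical area of the
preimage of E under Φ(z) = z² is at most C times the square root of the spherical area of E. -/
theorem sphericalArea_preimage_sq_le :
    ∃ C : ℝ, 0 < C ∧ ∀ E : Set ℂ, MeasurableSet E →
      sphericalArea ((fun z : ℂ => z ^ 2) ⁻¹' E) ≤
        ENNReal.ofReal C * sphericalArea E ^ ((1 : ℝ) / 2) := by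
  refine ⟨2 * (sphKappa.toReal/2 + 1), by positivity, fun E hE => ?_⟩
  have h1 : sphericalArea ((fun z : ℂ => z ^ 2) ⁻¹' E)
      = ∫⁻ z in ((fun z : ℂ => z^2) ⁻¹' E), pD z := rfl
  have h2 : sphericalArea E = ∫⁻ w in E, gD w := rfl
  rw [h1, h2]
  calc ∫⁻ z in ((fun z : ℂ => z^2) ⁻¹' E), pD z
      ≤ 2 * ∫⁻ w in E, fD w := preimage_bound E hE
    _ ≤ 2 * (ENNReal.ofReal (sphKappa.toReal/2 + 1) * (∫⁻ w in E, gD w) ^ ((1:ℝ)/2)) :=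
        mul_le_mul_right (key3 E hE) _
    _ = ENNReal.ofReal (2 * (sphKappa.toReal/2 + 1)) * (∫⁻ w in E, gD w) ^ ((1:ℝ)/2) := by
        rw [← mul_assoc, ENNReal.ofReal_mul (by norm_num), ENNReal.ofReal_ofNat]
end

section
/- Let Λ be a finite index set and {B_i}_{i∈Λ} a family of Euclidean disks in ℂ such that no B_i is contained in any other B_j. Choose a pairwise-disjoint subfamily σ₀ ⊆ Λ maximizing the total area ⋃_{i∈σ₀} B_i among all pairwise-disjoint subfamilies. Then for every i ∈ Λ \ σ₀, letting Θ = {j ∈ σ₀ : B_i ∩ B_j ≠ ∅}, one has Θ ≠ ∅ and area(B_i) ≤ area(⋃_{j∈Θ} B_j), and consequently the radius of B_i is at most 8 times the maximum radius among B_j, j ∈ Θ. -/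
open MeasureTheory

/-- If no disk of the family is contained in another and σ₀ is a pairwise-disjoint subfamily
of maximal total area, then every disk indexed outside σ₀ meets some disk of σ₀, its area is
at most the area of the union of the disks of σ₀ it meets, and its radius is at most 8 times
the radius of one of these. -/
theorem maximal_disjoint_subfamily {ι : Type} (Λ σ₀ : Finset ι) (x : ι → ℂ) (r : ι → ℝ)
    (hr : ∀ i ∈ Λ, 0 < r i)
    (hnc : ∀ i ∈ Λ, ∀ j ∈ Λ, i ≠ j → ¬ Metric.ball (x i) (r i) ⊆ Metric.ball (x j) (r j))
    (hsub : σ₀ ⊆ Λ)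
    (hdisj : (↑σ₀ : Set ι).Pairwise
      (fun i j => Disjoint (Metric.ball (x i) (r i)) (Metric.ball (x j) (r j))))
    (hmax : ∀ σ : Finset ι, σ ⊆ Λ →
      (↑σ : Set ι).Pairwise
        (fun i j => Disjoint (Metric.ball (x i) (r i)) (Metric.ball (x j) (r j))) →
      volume (⋃ i ∈ σ, Metric.ball (x i) (r i)) ≤ volume (⋃ i ∈ σ₀, Metric.ball (x i) (r i))) :
    ∀ i ∈ Λ, i ∉ σ₀ →
      {j | j ∈ σ₀ ∧ (Metric.ball (x i) (r i) ∩ Metric.ball (x j) (r j)).Nonempty}.Nonempty ∧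
      volume (Metric.ball (x i) (r i)) ≤
        volume (⋃ j ∈ {j | j ∈ σ₀ ∧ (Metric.ball (x i) (r i) ∩ Metric.ball (x j) (r j)).Nonempty},
          Metric.ball (x j) (r j)) ∧
      ∃ j ∈ σ₀, (Metric.ball (x i) (r i) ∩ Metric.ball (x j) (r j)).Nonempty ∧ r i ≤ 8 * r j := by
  classical
  intro i hiΛ hiσ
  set B : ι → Set ℂ := fun k => Metric.ball (x k) (r k) with hB
  set Θ : Finset ι := σ₀.filter (fun j => (B i ∩ B j).Nonempty) with hΘ
  have hΘset : {j | j ∈ σ₀ ∧ (B i ∩ B j).Nonempty} = (↑Θ : Set ι) := by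
    ext j; simp [hΘ]
  have hmeas : ∀ s : Finset ι, MeasurableSet (⋃ k ∈ s, B k) :=
    fun s => MeasurableSet.biUnion s.countable_toSet fun k _ => measurableSet_ball
  have hfin : ∀ s : Finset ι, volume (⋃ k ∈ s, B k) ≠ ⊤ := by
    intro s
    refine ((measure_biUnion_finset_le s B).trans_lt ?_).ne
    exact ENNReal.sum_lt_top.2 fun k _ => measure_ball_lt_top
  have hipos : 0 < r i := hr i hiΛ
  -- Claim 1 : Θ is nonempty
  have hΘne : Θ.Nonempty := by
    by_contra h
    have hd : ∀ j ∈ σ₀, Disjoint (B i) (B j) := by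
      intro j hj
      rw [Set.disjoint_iff_inter_eq_empty, ← Set.not_nonempty_iff_eq_empty]
      intro hne
      exact h ⟨j, Finset.mem_filter.2 ⟨hj, hne⟩⟩
    have hpw : (↑(insert i σ₀) : Set ι).Pairwise
        (fun a b => Disjoint (B a) (B b)) := by
      intro a ha b hb hab
      simp only [Finset.coe_insert, Set.mem_insert_iff, Finset.mem_coe] at ha hb
      rcases ha with rfl | ha
      · rcases hb with rfl | hb
        · exact absurd rfl hab
        · exact hd b hb
      · rcases hb with rfl | hb
        · exact (hd a ha).symm
        · exact hdisj ha hb hab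
    have hle := hmax (insert i σ₀) (Finset.insert_subset hiΛ hsub) hpw
    rw [Finset.set_biUnion_insert, measure_union
      (Set.disjoint_iUnion₂_right.2 fun j hj => hd j hj) (hmeas σ₀)] at hle
    have hle' : volume (B i) + volume (⋃ k ∈ σ₀, B k) ≤ 0 + volume (⋃ k ∈ σ₀, B k) := by
      rw [zero_add]; exact hle
    have h0 : volume (B i) = 0 :=
      le_antisymm ((WithTop.add_le_add_iff_right (hfin σ₀)).1 hle') zero_le
    exact absurd h0 (Metric.measure_ball_pos volume (x i) hipos).ne'
  -- Claim 2 : area bound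
  have hΘsub : Θ ⊆ σ₀ := Finset.filter_subset _ _
  have harea : volume (B i) ≤ volume (⋃ j ∈ Θ, B j) := by
    have hdiff : ∀ j ∈ σ₀ \ Θ, Disjoint (B i) (B j) := by
      intro j hj
      rw [Finset.mem_sdiff] at hj
      rw [Set.disjoint_iff_inter_eq_empty, ← Set.not_nonempty_iff_eq_empty]
      intro hne
      exact hj.2 (Finset.mem_filter.2 ⟨hj.1, hne⟩)
    have hpw : (↑(insert i (σ₀ \ Θ)) : Set ι).Pairwise
        (fun a b => Disjoint (B a) (B b)) := by
      intro a ha b hb hab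
      simp only [Finset.coe_insert, Set.mem_insert_iff, Finset.mem_coe] at ha hb
      rcases ha with rfl | ha
      · rcases hb with rfl | hb
        · exact absurd rfl hab
        · exact hdiff b hb
      · rcases hb with rfl | hb
        · exact (hdiff a ha).symm
        · exact hdisj ((Finset.sdiff_subset) ha) ((Finset.sdiff_subset) hb) hab
    have hle := hmax (insert i (σ₀ \ Θ))
      (Finset.insert_subset hiΛ ((Finset.sdiff_subset).trans hsub)) hpw
    rw [Finset.set_biUnion_insert, measure_union
      (Set.disjoint_iUnion₂_right.2 fun j hj => hdiff j hj) (hmeas _)] at hle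
    have hsplit : volume (⋃ k ∈ σ₀, B k) ≤
        volume (⋃ k ∈ σ₀ \ Θ, B k) + volume (⋃ j ∈ Θ, B j) := by
      refine (measure_mono ?_).trans (measure_union_le _ _)
      intro z hz
      simp only [Set.mem_iUnion, Set.mem_union] at hz ⊢
      obtain ⟨k, hk, hzk⟩ := hz
      by_cases hkΘ : k ∈ Θ
      · exact Or.inr ⟨k, hkΘ, hzk⟩
      · exact Or.inl ⟨k, Finset.mem_sdiff.2 ⟨hk, hkΘ⟩, hzk⟩
    have := hle.trans hsplit
    rw [add_comm (volume (⋃ k ∈ σ₀ \ Θ, B k))] at this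
    exact (WithTop.add_le_add_iff_right (hfin _)).1 this
  refine ⟨?_, ?_, ?_⟩
  · obtain ⟨j, hj⟩ := hΘne
    rw [hΘ, Finset.mem_filter] at hj
    exact ⟨j, hj⟩
  · rw [hΘset, Finset.set_biUnion_coe]
    exact harea
  -- Claim 3 : radius bound
  by_contra hcon
  push_neg at hcon
  obtain ⟨j₀, hj₀Θ, hj₀sup⟩ := Θ.exists_mem_eq_sup' hΘne r
  set R := r j₀ with hR
  have hj₀σ : j₀ ∈ σ₀ := hΘsub hj₀Θ
  have hj₀ne : (B i ∩ B j₀).Nonempty := (Finset.mem_filter.1 hj₀Θ).2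
  have hRpos : 0 < R := hr j₀ (hsub hj₀σ)
  have h8 : 8 * R < r i := hcon j₀ hj₀σ hj₀ne
  have hrle : ∀ j ∈ Θ, r j ≤ R := fun j hj => hj₀sup ▸ Finset.le_sup' r hj
  -- each ball of Θ lies in the annulus
  have hann : ∀ j ∈ Θ, ∀ z ∈ B j,
      dist z (x i) ≤ r i + 2 * R ∧ r i - 2 * R < dist z (x i) := by
    intro j hj z hz
    have hjσ : j ∈ σ₀ := hΘsub hj
    have hjne : (B i ∩ B j).Nonempty := (Finset.mem_filter.1 hj).2
    have hji : j ≠ i := fun h => hiσ (h ▸ hjσ)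
    have hzj : dist z (x j) < r j := Metric.mem_ball.1 hz
    have hRj : r j ≤ R := hrle j hj
    -- not contained : dist (x j) (x i) > r i - r j
    have hnsub := hnc j (hsub hjσ) i hiΛ hji
    obtain ⟨w, hwj, hwi⟩ := Set.not_subset.1 hnsub
    have hwj' : dist w (x j) < r j := Metric.mem_ball.1 hwj
    have hwi' : r i ≤ dist w (x i) := not_lt.1 (fun h => hwi (Metric.mem_ball.1 h))
    have hlow : r i - r j < dist (x j) (x i) := by
      have := dist_triangle w (x j) (x i)
      linarith
    -- intersecting : dist (x j) (x i) < r i + r j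
    obtain ⟨u, hui, huj⟩ := hjne
    have hui' : dist u (x i) < r i := Metric.mem_ball.1 hui
    have huj' : dist u (x j) < r j := Metric.mem_ball.1 huj
    have hhigh : dist (x j) (x i) < r i + r j := by
      have := dist_triangle (x j) u (x i)
      rw [dist_comm (x j) u] at this
      linarith
    constructor
    · have := dist_triangle z (x j) (x i)
      linarith
    · have := dist_triangle (x j) z (x i)
      rw [dist_comm (x j) z] at this
      linarith
  set A₁ : Set ℂ := Metric.closedBall (x i) (r i + 2 * R) with hA₁
  set A₀ : Set ℂ := Metric.closedBall (x i) (r i - 2 * R) with hA₀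
  have hsubA : (⋃ j ∈ Θ, B j) ⊆ A₁ := by
    intro z hz
    simp only [Set.mem_iUnion] at hz
    obtain ⟨j, hj, hzj⟩ := hz
    exact Metric.mem_closedBall.2 (hann j hj z hzj).1
  have hdisjA : Disjoint (⋃ j ∈ Θ, B j) A₀ := by
    rw [Set.disjoint_left]
    intro z hz hz0
    simp only [Set.mem_iUnion] at hz
    obtain ⟨j, hj, hzj⟩ := hz
    exact absurd (Metric.mem_closedBall.1 hz0) (not_le.2 (hann j hj z hzj).2)
  have hA₀A₁ : A₀ ⊆ A₁ := Metric.closedBall_subset_closedBall (by linarith)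
  have hkey : volume (B i) + volume A₀ ≤ volume A₁ := by
    calc volume (B i) + volume A₀ ≤ volume (⋃ j ∈ Θ, B j) + volume A₀ :=
          add_le_add_left harea _
      _ = volume ((⋃ j ∈ Θ, B j) ∪ A₀) :=
          (measure_union hdisjA measurableSet_closedBall).symm
      _ ≤ volume A₁ := measure_mono (Set.union_subset hsubA hA₀A₁)
  rw [hB, hA₀, hA₁, Complex.volume_ball, Complex.volume_closedBall,
    Complex.volume_closedBall] at hkey
  have hπ : (NNReal.pi : ENNReal) ≠ 0 := by
    exact ENNReal.coe_ne_zero.2 NNReal.pi_pos.ne'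
  have hπ' : (NNReal.pi : ENNReal) ≠ ⊤ := ENNReal.coe_ne_top
  rw [← add_mul, ENNReal.mul_le_mul_iff_left hπ hπ'] at hkey
  have h1 : (0:ℝ) ≤ r i := hipos.le
  have h2 : (0:ℝ) ≤ r i - 2 * R := by linarith
  have h3 : (0:ℝ) ≤ r i + 2 * R := by linarith
  rw [← ENNReal.ofReal_pow h1, ← ENNReal.ofReal_pow h2, ← ENNReal.ofReal_pow h3,
    ← ENNReal.ofReal_add (by positivity) (by positivity),
    ENNReal.ofReal_le_ofReal_iff (by positivity)] at hkey
  nlinarith [hkey, hipos, hRpos, h8]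
end

section
/- Let D be the connected component of sin⁻¹(𝔻) containing 0, where 𝔻 is the open unit disk. Then D is a Jordan domain symmetric about the origin, the restriction sin: ∂D → ∂𝔻 is a homeomorphism, and ∂D contains exactly two critical points of sin, namely π/2 and −π/2. -/
open Real Set

noncomputable section

lemma sinRe (z : ℂ) : (Complex.sin z).re = Real.sin z.re * Real.cosh z.im := by
  rw [Complex.sin_eq]
  simp [Complex.sin_ofReal_re, Complex.cos_ofReal_re, Complex.sinh_ofReal_re,
    Complex.cosh_ofReal_re, Complex.sin_ofReal_im, Complex.cos_ofReal_im,
    Complex.sinh_ofReal_im, Complex.cosh_ofReal_im]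

lemma sinIm (z : ℂ) : (Complex.sin z).im = Real.cos z.re * Real.sinh z.im := by
  rw [Complex.sin_eq]
  simp [Complex.sin_ofReal_re, Complex.cos_ofReal_re, Complex.sinh_ofReal_re,
    Complex.cosh_ofReal_re, Complex.sin_ofReal_im, Complex.cos_ofReal_im,
    Complex.sinh_ofReal_im, Complex.cosh_ofReal_im]

lemma normSq_sin' (z : ℂ) :
    Complex.normSq (Complex.sin z) = Real.sin z.re ^ 2 + Real.sinh z.im ^ 2 := by
  rw [Complex.normSq_apply, sinRe, sinIm]
  nlinarith [Real.cosh_sq z.im, Real.sin_sq_add_cos_sq z.re]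

lemma mem_ball_iff' (z : ℂ) :
    Complex.sin z ∈ Metric.ball (0:ℂ) 1 ↔ Real.sin z.re ^ 2 + Real.sinh z.im ^ 2 < 1 := by
  rw [Metric.mem_ball, dist_zero_right, ← normSq_sin']
  constructor <;> intro h <;>
    nlinarith [Complex.sq_norm (Complex.sin z), norm_nonneg (Complex.sin z)]

lemma mem_sphere_iff' (z : ℂ) :
    Complex.sin z ∈ Metric.sphere (0:ℂ) 1 ↔ Real.sin z.re ^ 2 + Real.sinh z.im ^ 2 = 1 := by
  rw [mem_sphere_iff_norm, sub_zero, ← normSq_sin']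
  constructor <;> intro h <;>
    nlinarith [Complex.sq_norm (Complex.sin z), norm_nonneg (Complex.sin z)]

/-- The explicit "eye" region. -/
def Esin : Set ℂ := {z | Real.sin z.re ^ 2 + Real.sinh z.im ^ 2 < 1 ∧ |z.re| < π / 2}

/-- Its boundary curve. -/
def Csin : Set ℂ := {z | Real.sin z.re ^ 2 + Real.sinh z.im ^ 2 = 1 ∧ |z.re| ≤ π / 2}

lemma sin_sq_mono {t x : ℝ} (ht0 : 0 ≤ t) (ht1 : t ≤ 1) (hx : |x| ≤ π / 2) :
    Real.sin (t * x) ^ 2 ≤ Real.sin x ^ 2 := by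
  have key : ∀ a : ℝ, Real.sin a ^ 2 = Real.sin |a| ^ 2 := by
    intro a
    rcases abs_cases a with ⟨h, _⟩ | ⟨h, _⟩
    · rw [h]
    · rw [h, Real.sin_neg]; ring
  have habs : |t * x| = t * |x| := by rw [abs_mul, abs_of_nonneg ht0]
  rw [key (t * x), key x, habs]
  have h1 : 0 ≤ t * |x| := by positivity
  have h2 : t * |x| ≤ |x| := by nlinarith [abs_nonneg x]
  have hsnn : 0 ≤ Real.sin (t * |x|) :=
    Real.sin_nonneg_of_nonneg_of_le_pi h1 (by nlinarith [Real.pi_pos])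
  have hle : Real.sin (t * |x|) ≤ Real.sin |x| := by
    apply Real.strictMonoOn_sin.monotoneOn ⟨by linarith [Real.pi_pos], by linarith⟩
      ⟨by linarith [abs_nonneg x, Real.pi_pos], hx⟩ h2
  nlinarith

lemma sinh_sq_mono {t y : ℝ} (ht0 : 0 ≤ t) (ht1 : t ≤ 1) :
    Real.sinh (t * y) ^ 2 ≤ Real.sinh y ^ 2 := by
  have h1 : |Real.sinh (t * y)| ≤ |Real.sinh y| := by
    rw [Real.abs_sinh, Real.abs_sinh, Real.sinh_le_sinh, abs_mul, abs_of_nonneg ht0]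
    nlinarith [abs_nonneg y]
  calc Real.sinh (t * y) ^ 2 = |Real.sinh (t * y)| ^ 2 := (sq_abs _).symm
    _ ≤ |Real.sinh y| ^ 2 := by nlinarith [abs_nonneg (Real.sinh (t * y))]
    _ = Real.sinh y ^ 2 := sq_abs _

lemma Esin_star {z : ℂ} (hz : z ∈ Esin) {t : ℝ} (ht0 : 0 ≤ t) (ht1 : t ≤ 1) :
    (t : ℂ) * z ∈ Esin := by
  obtain ⟨h1, h2⟩ := hz
  constructor
  · rw [show ((t : ℂ) * z).re = t * z.re by simp, show ((t : ℂ) * z).im = t * z.im by simp]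
    have := sin_sq_mono ht0 ht1 h2.le
    have := sinh_sq_mono (y := z.im) ht0 ht1
    linarith
  · rw [show ((t : ℂ) * z).re = t * z.re by simp, abs_mul, abs_of_nonneg ht0]
    nlinarith [abs_nonneg z.re]

lemma Esin_open : IsOpen Esin := by
  have hc : Continuous fun z : ℂ => Real.sin z.re ^ 2 + Real.sinh z.im ^ 2 := by fun_prop
  have h1 : IsOpen {z : ℂ | Real.sin z.re ^ 2 + Real.sinh z.im ^ 2 < 1} :=
    isOpen_lt hc continuous_const
  have h2 : IsOpen {z : ℂ | |z.re| < π / 2} := isOpen_lt (by fun_prop) continuous_const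
  exact h1.inter h2

lemma zero_mem_Esin : (0 : ℂ) ∈ Esin := by
  constructor <;> simp [Real.pi_pos]

lemma Esin_connected : IsConnected Esin := by
  refine ⟨⟨0, zero_mem_Esin⟩, isPreconnected_of_forall 0 ?_⟩
  intro y hy
  refine ⟨(fun r : ℝ => (r : ℂ) * y) '' Icc 0 1, ?_, ⟨0, ⟨le_refl 0, zero_le_one⟩, by simp⟩,
    ⟨1, ⟨zero_le_one, le_refl 1⟩, by simp⟩, ?_⟩
  · rintro _ ⟨r, ⟨hr0, hr1⟩, rfl⟩
    exact Esin_star hy hr0 hr1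
  · exact isPreconnected_Icc.image _
      ((by fun_prop : Continuous fun r : ℝ => (r : ℂ) * y)).continuousOn

lemma sin_sq_ne_abs {z : ℂ} (h1 : Real.sin z.re ^ 2 + Real.sinh z.im ^ 2 < 1) :
    |z.re| ≠ π / 2 := by
  intro h2
  have : Real.sin z.re ^ 2 = Real.sin |z.re| ^ 2 := by
    rcases abs_cases z.re with ⟨h, _⟩ | ⟨h, _⟩
    · rw [h]
    · rw [h, Real.sin_neg]; ring
  rw [h2, Real.sin_pi_div_two] at this
  nlinarith [sq_nonneg (Real.sinh z.im)]

lemma Dsin_eq_aux : connectedComponentIn (Complex.sin ⁻¹' Metric.ball (0 : ℂ) 1) 0 = Esin := by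
  set F := Complex.sin ⁻¹' Metric.ball (0 : ℂ) 1 with hF
  have hFmem : ∀ z : ℂ, z ∈ F ↔ Real.sin z.re ^ 2 + Real.sinh z.im ^ 2 < 1 := fun z =>
    mem_ball_iff' z
  have hEF : Esin ⊆ F := fun z hz => (hFmem z).2 hz.1
  apply subset_antisymm
  · have hV : IsOpen {z : ℂ | π / 2 < |z.re|} := isOpen_lt continuous_const (by fun_prop)
    have hdisj : Disjoint Esin {z : ℂ | π / 2 < |z.re|} := by
      rw [Set.disjoint_left]
      rintro z ⟨_, h2⟩ h3
      exact absurd h3 (not_lt.2 h2.le)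
    have hsub : connectedComponentIn F 0 ⊆ Esin ∪ {z : ℂ | π / 2 < |z.re|} := by
      intro z hz
      have h1 := (hFmem z).1 (connectedComponentIn_subset F 0 hz)
      rcases lt_trichotomy |z.re| (π / 2) with h | h | h
      · exact Or.inl ⟨h1, h⟩
      · exact absurd h (sin_sq_ne_abs h1)
      · exact Or.inr h
    have h0F : (0 : ℂ) ∈ F := (hFmem 0).2 (by norm_num)
    exact (isPreconnected_connectedComponentIn).subset_left_of_subset_union Esin_open hV hdisj
      hsub ⟨0, mem_connectedComponentIn h0F, zero_mem_Esin⟩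
  · exact Esin_connected.isPreconnected.subset_connectedComponentIn zero_mem_Esin hEF

lemma smul_mem_Esin_of_Csin {z : ℂ} (hz : z ∈ Csin) {t : ℝ} (ht0 : 0 ≤ t) (ht1 : t < 1) :
    (t : ℂ) * z ∈ Esin := by
  obtain ⟨h1, h2⟩ := hz
  have hre : ((t : ℂ) * z).re = t * z.re := by simp
  have him : ((t : ℂ) * z).im = t * z.im := by simp
  have habs : |t * z.re| = t * |z.re| := by rw [abs_mul, abs_of_nonneg ht0]
  have hxlt : |t * z.re| < π / 2 := by
    rw [habs]
    rcases eq_or_ne z.re 0 with h | h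
    · simp [h]; positivity
    · have : t * |z.re| < |z.re| := by nlinarith [abs_pos.2 h]
      linarith
  refine ⟨?_, by rwa [hre]⟩
  rw [hre, him]
  rcases eq_or_ne z.im 0 with hy | hy
  · rw [hy] at h1
    simp only [Real.sinh_zero] at h1
    have hs1 : Real.sin z.re ^ 2 = 1 := by nlinarith
    have key : ∀ a : ℝ, Real.sin a ^ 2 = Real.sin |a| ^ 2 := by
      intro a
      rcases abs_cases a with ⟨h, _⟩ | ⟨h, _⟩
      · rw [h]
      · rw [h, Real.sin_neg]; ring
    have h3 : Real.sin (t * z.re) ^ 2 < 1 := by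
      rw [key]
      have hnn : 0 ≤ Real.sin |t * z.re| :=
        Real.sin_nonneg_of_nonneg_of_le_pi (abs_nonneg _) (by nlinarith [Real.pi_pos])
      have hlt : Real.sin |t * z.re| < 1 := by
        have h5 : Real.sin |t * z.re| < Real.sin (π / 2) :=
          Real.strictMonoOn_sin ⟨by linarith [abs_nonneg (t*z.re), Real.pi_pos], hxlt.le⟩
            ⟨by linarith [Real.pi_pos], le_refl _⟩ hxlt
        rwa [Real.sin_pi_div_two] at h5
      nlinarith
    simp only [hy, mul_zero, Real.sinh_zero]
    nlinarith
  · have hsh : Real.sinh (t * z.im) ^ 2 < Real.sinh z.im ^ 2 := by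
      have e1 : |Real.sinh (t * z.im)| = Real.sinh (t * |z.im|) := by
        rw [Real.abs_sinh, abs_mul, abs_of_nonneg ht0]
      have e2 : |Real.sinh z.im| = Real.sinh |z.im| := Real.abs_sinh _
      have hlt : Real.sinh (t * |z.im|) < Real.sinh |z.im| := by
        rw [Real.sinh_lt_sinh]
        nlinarith [abs_pos.2 hy]
      have h0 : 0 ≤ Real.sinh (t * |z.im|) := by
        rw [Real.sinh_nonneg_iff]; positivity
      calc Real.sinh (t * z.im) ^ 2 = |Real.sinh (t * z.im)| ^ 2 := (sq_abs _).symm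
        _ = Real.sinh (t * |z.im|) ^ 2 := by rw [e1]
        _ < Real.sinh |z.im| ^ 2 := by nlinarith
        _ = Real.sinh z.im ^ 2 := by rw [← e2, sq_abs]
    have := sin_sq_mono ht0 ht1.le h2
    linarith

lemma Csin_subset_closure : Csin ⊆ closure Esin := by
  intro z hz
  have htends : Filter.Tendsto (fun t : ℝ => (t : ℂ) * z) (nhdsWithin 1 (Iio 1)) (nhds z) := by
    have : Filter.Tendsto (fun t : ℝ => (t : ℂ) * z) (nhds 1) (nhds ((1 : ℂ) * z)) :=
      ((Complex.continuous_ofReal.mul continuous_const).tendsto 1).congr (fun _ => rfl)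
        |>.mono_right (by simp)
    rw [one_mul] at this
    exact this.mono_left nhdsWithin_le_nhds
  apply mem_closure_of_tendsto htends
  filter_upwards [Ico_mem_nhdsLT_of_mem (by norm_num : (1:ℝ) ∈ Ioc (0:ℝ) 1)] with t ht
  exact smul_mem_Esin_of_Csin hz ht.1 ht.2

lemma frontier_Esin : frontier Esin = Csin := by
  have hclosed : IsClosed {z : ℂ | Real.sin z.re ^ 2 + Real.sinh z.im ^ 2 ≤ 1 ∧ |z.re| ≤ π / 2} := by
    apply IsClosed.inter
    · exact isClosed_le (((Real.continuous_sin.comp Complex.continuous_re).pow 2).add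
        ((Real.continuous_sinh.comp Complex.continuous_im).pow 2)) continuous_const
    · exact isClosed_le (continuous_abs.comp Complex.continuous_re) continuous_const
  have hsub : closure Esin ⊆ {z : ℂ | Real.sin z.re ^ 2 + Real.sinh z.im ^ 2 ≤ 1 ∧ |z.re| ≤ π / 2} :=
    closure_minimal (fun z hz => ⟨hz.1.le, hz.2.le⟩) hclosed
  rw [Esin_open.frontier_eq]
  apply subset_antisymm
  · rintro z ⟨hcl, hne'⟩
    obtain ⟨h1, h2⟩ := hsub hcl
    rcases lt_or_eq_of_le h1 with h | h
    · rcases lt_or_eq_of_le h2 with h' | h'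
      · exact absurd ⟨h, h'⟩ hne'
      · exact absurd h' (sin_sq_ne_abs h)
    · exact ⟨h, h2⟩
  · intro z hz
    refine ⟨Csin_subset_closure hz, ?_⟩
    intro hmem
    exact absurd hz.1 (ne_of_lt hmem.1)

lemma sin_injOn_Csin : Set.InjOn Complex.sin Csin := by
  rintro z ⟨hz1, hz2⟩ w ⟨hw1, hw2⟩ h
  have hre : Real.sin z.re * Real.cosh z.im = Real.sin w.re * Real.cosh w.im := by
    have := congrArg Complex.re h; rwa [sinRe, sinRe] at this
  have him : Real.cos z.re * Real.sinh z.im = Real.cos w.re * Real.sinh w.im := by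
    have := congrArg Complex.im h; rwa [sinIm, sinIm] at this
  have hzc : Real.sinh z.im ^ 2 = Real.cos z.re ^ 2 := by
    nlinarith [Real.sin_sq_add_cos_sq z.re]
  have hwc : Real.sinh w.im ^ 2 = Real.cos w.re ^ 2 := by
    nlinarith [Real.sin_sq_add_cos_sq w.re]
  have hzch : Real.cosh z.im ^ 2 = 2 - Real.sin z.re ^ 2 := by
    nlinarith [Real.cosh_sq z.im, Real.sin_sq_add_cos_sq z.re]
  have hwch : Real.cosh w.im ^ 2 = 2 - Real.sin w.re ^ 2 := by
    nlinarith [Real.cosh_sq w.im, Real.sin_sq_add_cos_sq w.re]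
  have hs2 : Real.sin z.re ^ 2 = Real.sin w.re ^ 2 := by
    have hsq : Real.sin z.re ^ 2 * (2 - Real.sin z.re ^ 2)
        = Real.sin w.re ^ 2 * (2 - Real.sin w.re ^ 2) := by
      have := congrArg (· ^ 2) hre
      simp only [mul_pow] at this
      rw [hzch, hwch] at this
      exact this
    have hz3 : Real.sin z.re ^ 2 ≤ 1 := Real.sin_sq_le_one z.re
    have hw3 : Real.sin w.re ^ 2 ≤ 1 := Real.sin_sq_le_one w.re
    have key : (Real.sin z.re ^ 2 - Real.sin w.re ^ 2)
        * (2 - Real.sin z.re ^ 2 - Real.sin w.re ^ 2) = 0 := by ring_nf; nlinarith [hsq]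
    rcases mul_eq_zero.1 key with h' | h'
    · linarith
    · linarith
  have hch : Real.cosh z.im = Real.cosh w.im := by
    have h2 : Real.cosh z.im ^ 2 = Real.cosh w.im ^ 2 := by rw [hzch, hwch, hs2]
    nlinarith [Real.cosh_pos z.im, Real.cosh_pos w.im]
  have hsin : Real.sin z.re = Real.sin w.re := by
    rw [hch] at hre
    exact mul_right_cancel₀ (ne_of_gt (Real.cosh_pos w.im)) hre
  have hx : z.re = w.re := by
    have hz4 := abs_le.1 hz2
    have hw4 := abs_le.1 hw2
    exact Real.injOn_sin ⟨hz4.1, hz4.2⟩ ⟨hw4.1, hw4.2⟩ hsin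
  have hy : z.im = w.im := by
    rcases eq_or_ne (Real.cos z.re) 0 with hc | hc
    · have h5 : Real.sinh z.im = 0 := by
        apply sq_eq_zero_iff.mp
        rw [hzc, hc]; ring
      have h6 : Real.sinh w.im = 0 := by
        apply sq_eq_zero_iff.mp
        rw [hwc, ← hx, hc]; ring
      exact Real.sinh_injective (h5.trans h6.symm)
    · rw [← hx] at him
      exact Real.sinh_injective (mul_left_cancel₀ hc him)
  exact Complex.ext hx hy

lemma sin_surjOn_Csin : ∀ w ∈ Metric.sphere (0:ℂ) 1, ∃ z ∈ Csin, Complex.sin z = w := by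
  intro w hw
  have huv : w.re ^ 2 + w.im ^ 2 = 1 := by
    have h1 : ‖w‖ = 1 := by simpa using hw
    have := Complex.sq_norm w
    rw [h1] at this
    rw [Complex.normSq_apply] at this
    nlinarith
  set u := w.re
  set v := w.im
  have hv1 : |v| ≤ 1 := by nlinarith [sq_nonneg u, sq_abs v, abs_nonneg v]
  set s : ℝ := u / Real.sqrt (1 + |v|) with hs
  have h1v : (0:ℝ) < 1 + |v| := by linarith [abs_nonneg v]
  have hsq1v : Real.sqrt (1 + |v|) ^ 2 = 1 + |v| := Real.sq_sqrt h1v.le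
  have hsqpos : 0 < Real.sqrt (1 + |v|) := Real.sqrt_pos.2 h1v
  have hs2 : s ^ 2 = 1 - |v| := by
    rw [hs, div_pow, hsq1v]
    rw [div_eq_iff (by linarith)]
    nlinarith [sq_abs v]
  have hs1 : s ^ 2 ≤ 1 := by nlinarith [abs_nonneg v]
  have hsm : -1 ≤ s ∧ s ≤ 1 := abs_le.1 (abs_le_one_iff_mul_self_le_one.2 (by nlinarith))
  set x := Real.arcsin s with hx
  set y := Real.arsinh (v / Real.sqrt |v|) with hy
  have hsinx : Real.sin x = s := Real.sin_arcsin hsm.1 hsm.2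
  have hcosx : Real.cos x = Real.sqrt |v| := by
    rw [hx, Real.cos_arcsin, hs2]
    congr 1
    ring
  have hsinhy : Real.sinh y = v / Real.sqrt |v| := Real.sinh_arsinh _
  have hsinhy2 : Real.sinh y ^ 2 = |v| := by
    rw [hsinhy]
    rcases eq_or_ne v 0 with h | h
    · simp [h]
    · have hvpos : 0 < |v| := abs_pos.2 h
      have : Real.sqrt |v| ^ 2 = |v| := Real.sq_sqrt hvpos.le
      rw [div_pow, this, ← sq_abs v, sq, mul_div_assoc, div_self hvpos.ne', mul_one]
  set z : ℂ := Complex.mk x y with hz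
  have hzre : z.re = x := rfl
  have hzim : z.im = y := rfl
  have hcoshy : Real.cosh y = Real.sqrt (1 + |v|) := by
    have h2 : Real.cosh y ^ 2 = 1 + |v| := by
      rw [Real.cosh_sq, hsinhy2]; ring
    rw [← Real.sqrt_sq (Real.cosh_pos y).le, h2]
  refine ⟨z, ⟨?_, ?_⟩, ?_⟩
  · rw [hzre, hzim, hsinx, hsinhy2, hs2]; ring
  · rw [hzre, hx]
    exact abs_le.2 ⟨Real.neg_pi_div_two_le_arcsin s, Real.arcsin_le_pi_div_two s⟩
  · apply Complex.ext
    · rw [sinRe, hzre, hzim, hsinx, hcoshy, hs]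
      field_simp
      rfl
    · rw [sinIm, hzre, hzim, hcosx, hsinhy]
      rcases eq_or_ne v 0 with h | h
      · simp [h]
        exact h.symm
      · have hvpos : 0 < |v| := abs_pos.2 h
        have hsv : Real.sqrt |v| ≠ 0 := (Real.sqrt_pos.2 hvpos).ne'
        field_simp
        rfl

lemma isCompact_Csin : IsCompact Csin := by
  have hclosed : IsClosed Csin := by
    apply IsClosed.inter
    · exact isClosed_eq (((Real.continuous_sin.comp Complex.continuous_re).pow 2).add
        ((Real.continuous_sinh.comp Complex.continuous_im).pow 2)) continuous_const
    · exact isClosed_le (continuous_abs.comp Complex.continuous_re) continuous_const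
  have hbdd : Bornology.IsBounded Csin := by
    apply (Metric.isBounded_closedBall (x := (0:ℂ)) (r := π / 2 + 1)).subset
    rintro z ⟨h1, h2⟩
    have him : |z.im| ≤ 1 := by
      have hsh : Real.sinh z.im ^ 2 ≤ 1 := by nlinarith [sq_nonneg (Real.sin z.re)]
      have habs : Real.sinh |z.im| ≤ 1 := by
        rw [← Real.abs_sinh]
        nlinarith [abs_nonneg (Real.sinh z.im), sq_abs (Real.sinh z.im)]
      have := Real.self_le_sinh_iff.2 (abs_nonneg z.im)
      linarith
    have : ‖z‖ ≤ π / 2 + 1 :=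
      le_trans (Complex.norm_le_abs_re_add_abs_im z) (by linarith)
    simpa [Complex.dist_eq] using this
  exact Metric.isCompact_of_isClosed_isBounded hclosed hbdd

lemma Csin_inter_critical :
    Csin ∩ {z : ℂ | Complex.cos z = 0} = {((Real.pi / 2 : ℝ) : ℂ), (-(Real.pi / 2 : ℝ) : ℂ)} := by
  ext z
  simp only [mem_inter_iff, mem_setOf_eq, mem_insert_iff, mem_singleton_iff]
  constructor
  · rintro ⟨⟨h1, h2⟩, hc⟩
    rw [Complex.cos_eq_zero_iff] at hc
    obtain ⟨k, hk⟩ := hc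
    have hzr : z = (((2 * (k:ℝ) + 1) * π / 2 : ℝ) : ℂ) := by rw [hk]; push_cast; ring
    have hre : z.re = (2 * (k:ℝ) + 1) * π / 2 := by rw [hzr, Complex.ofReal_re]
    have hb : |2 * (k:ℝ) + 1| ≤ 1 := by
      rw [hre] at h2
      have hpi : 0 < π / 2 := by positivity
      rw [abs_le] at h2 ⊢
      constructor <;> nlinarith [h2.1, h2.2]
    have hbz : |2 * k + 1| ≤ (1:ℤ) := by exact_mod_cast hb
    have hbz' : -1 ≤ 2 * k + 1 ∧ 2 * k + 1 ≤ 1 := abs_le.1 hbz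
    have : k = 0 ∨ k = -1 := by omega
    rcases this with rfl | rfl
    · left; rw [hzr]; norm_num
    · right; rw [hzr]; push_cast; ring
  · have hmem : ∀ w : ℂ, w = (((π/2 : ℝ)) : ℂ) ∨ w = -((π/2 : ℝ) : ℂ) →
        (Real.sin w.re ^ 2 + Real.sinh w.im ^ 2 = 1 ∧ |w.re| ≤ π / 2) ∧ Complex.cos w = 0 := by
      rintro w (rfl | rfl)
      · refine ⟨⟨?_, ?_⟩, ?_⟩
        · simp [Real.sin_pi_div_two]
        · simp [abs_of_nonneg (by positivity : (0:ℝ) ≤ π/2)]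
        · rw [← Complex.ofReal_cos, Real.cos_pi_div_two, Complex.ofReal_zero]
      · refine ⟨⟨?_, ?_⟩, ?_⟩
        · simp [Real.sin_neg, Real.sin_pi_div_two]
        · simp [abs_of_nonneg (by positivity : (0:ℝ) ≤ π/2)]
        · rw [Complex.cos_neg, ← Complex.ofReal_cos, Real.cos_pi_div_two, Complex.ofReal_zero]
    exact fun h => hmem z h

lemma Esin_neg (z : ℂ) : z ∈ Esin ↔ -z ∈ Esin := by
  simp [Esin, Complex.neg_re, Complex.neg_im, Real.sin_neg, Real.sinh_neg, abs_neg, neg_sq]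

end

/-- The component of sin⁻¹(𝔻) containing 0. -/
noncomputable def Dsin : Set ℂ :=
  connectedComponentIn (Complex.sin ⁻¹' Metric.ball (0 : ℂ) 1) 0

/-- D is an open connected Jordan domain symmetric about the origin, sin restricts to a
homeomorphism ∂D → ∂𝔻, and ∂D contains exactly the two critical points π/2 and -π/2. -/
theorem Dsin_jordan_domain :
    IsOpen Dsin ∧ IsConnected Dsin ∧ (∀ z : ℂ, z ∈ Dsin ↔ -z ∈ Dsin) ∧
    (∃ h : (frontier Dsin) ≃ₜ (Metric.sphere (0 : ℂ) 1 : Set ℂ),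
      ∀ z : frontier Dsin, (h z : ℂ) = Complex.sin z) ∧
    frontier Dsin ∩ {z : ℂ | Complex.cos z = 0} =
      {((Real.pi / 2 : ℝ) : ℂ), (-(Real.pi / 2 : ℝ) : ℂ)} := by
  have hD : Dsin = Esin := Dsin_eq_aux
  have hfront : frontier Dsin = Csin := by rw [hD, frontier_Esin]
  refine ⟨?_, ?_, ?_, ?_, ?_⟩
  · rw [hD]; exact Esin_open
  · rw [hD]; exact Esin_connected
  · intro z; rw [hD]; exact Esin_neg z
  · haveI : CompactSpace ↥Csin := isCompact_iff_compactSpace.mp isCompact_Csin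
    have hgbij : Function.Bijective
        (fun z : Csin => (⟨Complex.sin z, (mem_sphere_iff' z).2 z.2.1⟩ :
          (Metric.sphere (0:ℂ) 1 : Set ℂ))) := by
      constructor
      · intro a b hab
        exact Subtype.ext (sin_injOn_Csin a.2 b.2 (congrArg Subtype.val hab))
      · intro w
        obtain ⟨z, hz, hzw⟩ := sin_surjOn_Csin w w.2
        exact ⟨⟨z, hz⟩, Subtype.ext hzw⟩
    let e : Csin ≃ (Metric.sphere (0:ℂ) 1 : Set ℂ) := Equiv.ofBijective _ hgbij
    have hecont : Continuous e :=
      Continuous.subtype_mk (Complex.continuous_sin.comp continuous_subtype_val) _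
    let φ : Csin ≃ₜ (Metric.sphere (0:ℂ) 1 : Set ℂ) :=
      Continuous.homeoOfEquivCompactToT2 (f := e) hecont
    refine ⟨(Homeomorph.setCongr hfront).trans φ, fun z => rfl⟩
  · rw [hfront]
    exact Csin_inter_critical
end

section
/- Let D be the component of sin⁻¹(𝔻) containing 0 and D_k = D + kπ for k ∈ ℤ. Then the D_k are precisely the connected components of sin⁻¹(𝔻); for each k, ∂D_k ∩ ∂D_{k+1} = {kπ + π/2}; and ∂D_i ∩ ∂D_j = ∅ whenever |i − j| > 1. -/
open Real Set Topology Filter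

/-- The translates D_k = D + kπ. -/
noncomputable def DsinK (k : ℤ) : Set ℂ :=
  (fun z : ℂ => z + (k : ℂ) * (Real.pi : ℂ)) '' Dsin


noncomputable section

namespace DsinAux

/-- squared modulus of sin in terms of re/im -/
def g (z : ℂ) : ℝ := Real.sin z.re ^ 2 + Real.sinh z.im ^ 2

def U : Set ℂ := Complex.sin ⁻¹' Metric.ball (0 : ℂ) 1

lemma normSq_sin (z : ℂ) : Complex.normSq (Complex.sin z) = g z := by
  rw [Complex.sin_eq]
  rw [← Complex.ofReal_sin, ← Complex.ofReal_cos, ← Complex.ofReal_sinh, ← Complex.ofReal_cosh,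
    ← Complex.ofReal_mul, ← Complex.ofReal_mul, Complex.normSq_add_mul_I]
  unfold g
  linear_combination (Real.sin z.re ^ 2) * (Real.cosh_sq z.im) +
    (Real.sinh z.im ^ 2) * (Real.sin_sq_add_cos_sq z.re)

lemma mem_U (z : ℂ) : z ∈ U ↔ g z < 1 := by
  rw [U, Set.mem_preimage, Metric.mem_ball, dist_zero_right,
    Complex.norm_def, show (1:ℝ) = Real.sqrt 1 by simp,
    Real.sqrt_lt_sqrt_iff (Complex.normSq_nonneg _), normSq_sin, Real.sqrt_one]

def W (k : ℤ) : Set ℂ := {z | |z.re - k * π| < π / 2 ∧ g z < 1}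

lemma sin_sq_int (k : ℤ) (x : ℝ) : Real.sin (k * π + x) ^ 2 = Real.sin x ^ 2 := by
  rw [add_comm, Real.sin_add_int_mul_pi, mul_pow, ← zpow_natCast ((-1:ℝ)^k) 2, ← zpow_mul]
  rw [Even.neg_one_zpow ⟨k, by ring⟩, one_mul]

lemma W_subset_U (k : ℤ) : W k ⊆ U := fun z hz => (mem_U z).2 hz.2

lemma W_open (k : ℤ) : IsOpen (W k) := by
  have h1 : Continuous fun z : ℂ => |z.re - k * π| :=
    (Complex.continuous_re.sub continuous_const).abs
  have h2 : Continuous g :=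
    ((Real.continuous_sin.comp Complex.continuous_re).pow 2).add
      ((Real.continuous_sinh.comp Complex.continuous_im).pow 2)
  exact (isOpen_lt h1 continuous_const).inter (isOpen_lt h2 continuous_const)

lemma W_disjoint {i j : ℤ} (h : i ≠ j) : Disjoint (W i) (W j) := by
  rw [Set.disjoint_left]
  rintro z ⟨hi, _⟩ ⟨hj, _⟩
  have hpi := Real.pi_pos
  have : |(i : ℝ) - j| * π < π := by
    calc |(i : ℝ) - j| * π = |(i*π - z.re) + (z.re - j*π)| := by
          rw [show |(i:ℝ) - j| * π = |((i:ℝ) - j) * π| by rw [abs_mul, abs_of_pos hpi]]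
          congr 1; ring
      _ ≤ |(i:ℝ)*π - z.re| + |z.re - j*π| := abs_add_le _ _
      _ < π/2 + π/2 := by rw [abs_sub_comm ((i:ℝ)*π) z.re]; exact add_lt_add hi hj
      _ = π := by ring
  have h1 : |(i : ℝ) - j| < 1 := by
    by_contra hc
    push_neg at hc
    nlinarith
  have h2 : |i - j| < 1 := by exact_mod_cast (by push_cast; exact h1 : |((i - j : ℤ) : ℝ)| < 1)
  rw [abs_lt] at h2
  omega

lemma sin_sq_le {a b : ℝ} (hab : |a| ≤ |b|) (hb : |b| ≤ π / 2) : Real.sin a ^ 2 ≤ Real.sin b ^ 2 := by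
  have key : ∀ c : ℝ, Real.sin c ^ 2 = Real.sin |c| ^ 2 := by
    intro c
    rcases abs_cases c with ⟨h, _⟩ | ⟨h, _⟩
    · rw [h]
    · rw [h, Real.sin_neg]; ring
  rw [key a, key b]
  have h0a : 0 ≤ |a| := abs_nonneg a
  have hs : Real.sin |a| ≤ Real.sin |b| := by
    have := Real.strictMonoOn_sin.monotoneOn (a := |a|) (b := |b|)
      ⟨by linarith [Real.pi_pos], by linarith⟩ ⟨by linarith [Real.pi_pos], hb⟩ hab
    exact this
  have hna : 0 ≤ Real.sin |a| :=
    Real.sin_nonneg_of_nonneg_of_le_pi h0a (by linarith [Real.pi_pos])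
  exact pow_le_pow_left₀ hna hs 2

lemma star_mem {z : ℂ} (hz : z ∈ W 0) {t : ℝ} (ht : t ∈ Set.Icc (0:ℝ) 1) : t • z ∈ W 0 := by
  obtain ⟨h1, h2⟩ := hz
  simp only [W, Set.mem_setOf_eq, g, Complex.smul_re, Complex.smul_im, smul_eq_mul] at *
  rw [Int.cast_zero, zero_mul, sub_zero] at *
  have hta : |t| ≤ 1 := abs_le.2 ⟨by linarith [ht.1], ht.2⟩
  have habs : |t * z.re| ≤ |z.re| := by
    rw [abs_mul]; nlinarith [abs_nonneg z.re]
  constructor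
  · linarith [habs]
  · have hsin : Real.sin (t * z.re) ^ 2 ≤ Real.sin z.re ^ 2 :=
      sin_sq_le habs (le_of_lt h1)
    have hsinh : Real.sinh (t * z.im) ^ 2 ≤ Real.sinh z.im ^ 2 := by
      have k1 : ∀ c : ℝ, Real.sinh c ^ 2 = Real.sinh |c| ^ 2 := by
        intro c
        rcases abs_cases c with ⟨h, _⟩ | ⟨h, _⟩
        · rw [h]
        · rw [h, Real.sinh_neg]; ring
      rw [k1 (t * z.im), k1 z.im]
      have : |t * z.im| ≤ |z.im| := by
        rw [abs_mul]; nlinarith [abs_nonneg z.im]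
      exact pow_le_pow_left₀ (Real.sinh_nonneg_iff.2 (abs_nonneg _)) (Real.sinh_le_sinh.2 this) 2
    unfold g at *
    linarith

lemma zero_mem_W0 : (0 : ℂ) ∈ W 0 := by
  constructor
  · simp [Real.pi_pos, Real.pi_div_two_pos]
  · simp [g]

lemma W0_preconnected : IsPreconnected (W 0) := by
  have : IsPathConnected (W 0) := by
    refine ⟨0, zero_mem_W0, fun {z} hz => ?_⟩
    refine ⟨⟨⟨fun t => (t : ℝ) • z, ?_⟩, ?_, ?_⟩, fun t => star_mem hz t.2⟩
    · exact (continuous_subtype_val.smul continuous_const)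
    · simp
    · simp
  exact this.isConnected.isPreconnected

lemma ofReal_int_mul_pi (k : ℤ) : ((k : ℂ) * (Real.pi : ℂ)) = (((k : ℝ) * π : ℝ) : ℂ) := by
  push_cast; ring

lemma W_eq_image (k : ℤ) : W k = (fun z : ℂ => z + (k : ℂ) * (Real.pi : ℂ)) '' W 0 := by
  ext z
  rw [ofReal_int_mul_pi]
  constructor
  · rintro ⟨h1, h2⟩
    refine ⟨z - (((k:ℝ) * π : ℝ) : ℂ), ⟨?_, ?_⟩, by ring⟩
    · simp only [Complex.sub_re, Complex.ofReal_re, Int.cast_zero, zero_mul, sub_zero]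
      simpa using h1
    · unfold g at *
      simp only [Complex.sub_re, Complex.sub_im, Complex.ofReal_re, Complex.ofReal_im, sub_zero]
      have hs := sin_sq_int (-k) z.re
      push_cast at hs
      rw [show z.re - (k:ℝ) * π = -(k:ℝ) * π + z.re by ring, hs]
      exact h2
  · rintro ⟨w, ⟨h1, h2⟩, rfl⟩
    constructor
    · simp only [Complex.add_re, Complex.ofReal_re]
      simpa using h1
    · unfold g at *
      simp only [Complex.add_re, Complex.add_im, Complex.ofReal_re, Complex.ofReal_im, add_zero]
      have : w.re + (k:ℝ) * π = k * π + w.re := by ring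
      rw [this, sin_sq_int k w.re]
      exact h2

lemma W_preconnected (k : ℤ) : IsPreconnected (W k) := by
  rw [W_eq_image]
  exact W0_preconnected.image _ (continuous_id.add continuous_const).continuousOn

lemma mem_W_exists {z : ℂ} (hz : z ∈ U) : ∃ k : ℤ, z ∈ W k := by
  rw [mem_U] at hz
  have hsin : Real.sin z.re ^ 2 < 1 := by
    have := sq_nonneg (Real.sinh z.im)
    unfold g at hz; linarith
  set x := z.re with hx
  refine ⟨round (x / π), ?_, hz⟩
  have hpi := Real.pi_pos
  have h1 : |x / π - round (x / π)| ≤ 1 / 2 := abs_sub_round (x / π)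
  have h2 : |x - round (x / π) * π| ≤ π / 2 := by
    have : x - round (x / π) * π = (x / π - round (x / π)) * π := by
      field_simp
    rw [this, abs_mul, abs_of_pos hpi]
    nlinarith
  rcases lt_or_eq_of_le h2 with h | h
  · exact h
  · exfalso
    set k := round (x / π)
    rcases abs_eq (by linarith : (0:ℝ) ≤ π / 2) |>.1 h with h3 | h3
    · have : x = k * π + π / 2 := by linarith
      rw [this, sin_sq_int k, Real.sin_pi_div_two] at hsin
      norm_num at hsin
    · have : x = k * π + (-(π / 2)) := by linarith
      rw [this, sin_sq_int k, Real.sin_neg, Real.sin_pi_div_two] at hsin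
      norm_num at hsin

lemma U_eq_iUnion : U = ⋃ k : ℤ, W k := by
  ext z
  simp only [Set.mem_iUnion]
  exact ⟨fun h => mem_W_exists h, fun ⟨k, hk⟩ => W_subset_U k hk⟩

lemma cc_eq (k : ℤ) {u : ℂ} (hu : u ∈ W k) : connectedComponentIn U u = W k := by
  apply Set.Subset.antisymm
  · have huU : u ∈ U := W_subset_U k hu
    rw [connectedComponentIn_eq_image huU]
    have hclopen : IsClopen (Subtype.val ⁻¹' W k : Set U) := by
      constructor
      · rw [← isOpen_compl_iff]
        have : (Subtype.val ⁻¹' W k : Set U)ᶜ =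
            Subtype.val ⁻¹' (⋃ j ∈ {j : ℤ | j ≠ k}, W j) := by
          ext ⟨z, hz⟩
          simp only [Set.mem_compl_iff, Set.mem_preimage, Set.mem_iUnion, Set.mem_setOf_eq]
          constructor
          · intro hnk
            obtain ⟨j, hj⟩ := mem_W_exists hz
            exact ⟨j, fun hjk => hnk (hjk ▸ hj), hj⟩
          · rintro ⟨j, hjk, hj⟩ hk'
            exact (Set.disjoint_left.1 (W_disjoint hjk) hj) hk'
        rw [this]
        exact (isOpen_biUnion fun j _ => W_open j).preimage continuous_subtype_val
      · exact (W_open k).preimage continuous_subtype_val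
    have := hclopen.connectedComponent_subset (x := ⟨u, huU⟩) hu
    calc Subtype.val '' connectedComponent (⟨u, huU⟩ : U)
        ⊆ Subtype.val '' (Subtype.val ⁻¹' W k : Set U) := Set.image_mono this
      _ ⊆ W k := Set.image_preimage_subset _ _
  · exact (W_preconnected k).subset_connectedComponentIn hu (W_subset_U k)

lemma Dsin_eq : Dsin = W 0 := cc_eq 0 zero_mem_W0

lemma DsinK_eq (k : ℤ) : DsinK k = W k := by
  rw [DsinK, Dsin_eq, ← W_eq_image]

lemma closure_W_subset (k : ℤ) :
    closure (W k) ⊆ {z : ℂ | |z.re - k * π| ≤ π / 2 ∧ g z ≤ 1} := by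
  apply closure_minimal
  · exact fun z hz => ⟨le_of_lt hz.1, le_of_lt hz.2⟩
  · have h1 : Continuous fun z : ℂ => |z.re - k * π| :=
      (Complex.continuous_re.sub continuous_const).abs
    have h2 : Continuous g :=
      ((Real.continuous_sin.comp Complex.continuous_re).pow 2).add
        ((Real.continuous_sinh.comp Complex.continuous_im).pow 2)
    exact (isClosed_le h1 continuous_const).inter (isClosed_le h2 continuous_const)

lemma cos_sq_lt_one {t : ℝ} (ht : t ∈ Set.Ioo (0:ℝ) (π/2)) : Real.cos t ^ 2 < 1 := by
  have hs : 0 < Real.sin t := Real.sin_pos_of_pos_of_lt_pi ht.1 (by linarith [Real.pi_pos, ht.2])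
  nlinarith [Real.sin_sq_add_cos_sq t]

lemma not_mem_W_endpoint (k j : ℤ) : (((j : ℝ) * π + π / 2 : ℝ) : ℂ) ∉ W k := by
  intro h
  have h2 := h.2
  unfold g at h2
  simp only [Complex.ofReal_re, Complex.ofReal_im, Real.sinh_zero] at h2
  rw [sin_sq_int j, Real.sin_pi_div_two] at h2
  norm_num at h2

lemma mem_frontier_left (k : ℤ) : (((k : ℝ) * π + π / 2 : ℝ) : ℂ) ∈ frontier (W k) := by
  rw [(W_open k).frontier_eq, Set.mem_diff]
  refine ⟨?_, not_mem_W_endpoint k k⟩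
  apply mem_closure_of_tendsto (f := fun t : ℝ => (((k : ℝ) * π + π / 2 - t : ℝ) : ℂ))
    (b := 𝓝[>] (0:ℝ))
  · have : Continuous fun t : ℝ => (((k : ℝ) * π + π / 2 - t : ℝ) : ℂ) :=
      Complex.continuous_ofReal.comp (continuous_const.sub continuous_id)
    have ht := this.tendsto 0
    simp only [sub_zero] at ht
    exact ht.mono_left nhdsWithin_le_nhds
  · filter_upwards [Ioo_mem_nhdsGT_of_mem (Set.left_mem_Ico.2 Real.pi_div_two_pos)] with t ht
    constructor
    · simp only [Complex.ofReal_re]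
      rw [show (k:ℝ) * π + π / 2 - t - k * π = π / 2 - t by ring,
        abs_of_pos (by linarith [ht.2] : (0:ℝ) < π / 2 - t)]
      linarith [ht.1]
    · unfold g
      simp only [Complex.ofReal_re, Complex.ofReal_im, Real.sinh_zero]
      rw [show (k:ℝ) * π + π / 2 - t = k * π + (π / 2 - t) by ring, sin_sq_int k,
        Real.sin_pi_div_two_sub]
      nlinarith [cos_sq_lt_one ht]

lemma mem_frontier_right (k : ℤ) : (((k : ℝ) * π + π / 2 : ℝ) : ℂ) ∈ frontier (W (k + 1)) := by
  rw [(W_open (k+1)).frontier_eq, Set.mem_diff]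
  refine ⟨?_, not_mem_W_endpoint (k+1) k⟩
  apply mem_closure_of_tendsto (f := fun t : ℝ => (((k : ℝ) * π + π / 2 + t : ℝ) : ℂ))
    (b := 𝓝[>] (0:ℝ))
  · have : Continuous fun t : ℝ => (((k : ℝ) * π + π / 2 + t : ℝ) : ℂ) :=
      Complex.continuous_ofReal.comp (continuous_const.add continuous_id)
    have ht := this.tendsto 0
    simp only [add_zero] at ht
    exact ht.mono_left nhdsWithin_le_nhds
  · filter_upwards [Ioo_mem_nhdsGT_of_mem (Set.left_mem_Ico.2 Real.pi_div_two_pos)] with t ht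
    constructor
    · simp only [Complex.ofReal_re]
      push_cast
      rw [show (k:ℝ) * π + π / 2 + t - (k + 1) * π = -(π / 2 - t) by ring, abs_neg,
        abs_of_pos (by linarith [ht.2] : (0:ℝ) < π / 2 - t)]
      linarith [ht.1]
    · unfold g
      simp only [Complex.ofReal_re, Complex.ofReal_im, Real.sinh_zero]
      rw [show (k:ℝ) * π + π / 2 + t = k * π + (π / 2 + t) by ring, sin_sq_int k,
        show π / 2 + t = t + π / 2 by ring, Real.sin_add_pi_div_two]
      nlinarith [cos_sq_lt_one ht]

end DsinAux

end

/-- The D_k are exactly the components of sin⁻¹(𝔻); ∂D_k ∩ ∂D_{k+1} = {kπ + π/2}; and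
∂D_i ∩ ∂D_j = ∅ when |i - j| > 1. -/
theorem DsinK_components :
    (∀ S : Set ℂ,
      (∃ u ∈ Complex.sin ⁻¹' Metric.ball (0 : ℂ) 1,
        S = connectedComponentIn (Complex.sin ⁻¹' Metric.ball (0 : ℂ) 1) u) ↔
      ∃ k : ℤ, S = DsinK k) ∧
    (∀ k : ℤ, frontier (DsinK k) ∩ frontier (DsinK (k + 1)) =
      {(k : ℂ) * (Real.pi : ℂ) + ((Real.pi / 2 : ℝ) : ℂ)}) ∧
    (∀ i j : ℤ, 1 < |i - j| → frontier (DsinK i) ∩ frontier (DsinK j) = ∅) := by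
  have hD : ∀ k : ℤ, DsinK k = DsinAux.W k := DsinAux.DsinK_eq
  refine ⟨?_, ?_, ?_⟩
  · intro S
    constructor
    · rintro ⟨u, hu, rfl⟩
      obtain ⟨k, hk⟩ := DsinAux.mem_W_exists hu
      exact ⟨k, (DsinAux.cc_eq k hk).trans (hD k).symm⟩
    · rintro ⟨k, rfl⟩
      have hm : ((((k:ℝ)) * π : ℝ) : ℂ) ∈ DsinAux.W k := by
        constructor
        · simp [Real.pi_div_two_pos, Real.pi_pos]
        · unfold DsinAux.g
          simp [Real.sin_int_mul_pi]
      exact ⟨_, DsinAux.W_subset_U k hm, ((DsinAux.cc_eq k hm).trans (hD k).symm).symm⟩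
  · intro k
    rw [hD k, hD (k+1)]
    rw [show ((k : ℂ) * (Real.pi : ℂ) + ((Real.pi / 2 : ℝ) : ℂ)) = (((k:ℝ) * π + π/2 : ℝ) : ℂ) by
      push_cast; ring]
    apply Set.Subset.antisymm
    · rintro z ⟨hz1, hz2⟩
      have c1 := DsinAux.closure_W_subset k (frontier_subset_closure hz1)
      have c2 := DsinAux.closure_W_subset (k+1) (frontier_subset_closure hz2)
      obtain ⟨a1, b1⟩ := c1
      obtain ⟨a2, -⟩ := c2
      rw [abs_le] at a1 a2
      push_cast at a2
      have hre : z.re = (k:ℝ) * π + π / 2 := by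
        linarith [a1.2, a2.1]
      have him : z.im = 0 := by
        have hsin : Real.sin z.re ^ 2 = 1 := by
          rw [hre, DsinAux.sin_sq_int k, Real.sin_pi_div_two]
          norm_num
        have h0 : Real.sinh z.im = 0 := by
          unfold DsinAux.g at b1
          nlinarith [sq_nonneg (Real.sinh z.im)]
        exact Real.sinh_eq_zero.1 h0
      rw [Set.mem_singleton_iff]
      apply Complex.ext
      · simpa using hre
      · simpa using him
    · rw [Set.singleton_subset_iff]
      exact ⟨DsinAux.mem_frontier_left k, DsinAux.mem_frontier_right k⟩
  · intro i j hij
    rw [hD i, hD j, Set.eq_empty_iff_forall_notMem]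
    rintro z ⟨h1, h2⟩
    have c1 := (DsinAux.closure_W_subset i (frontier_subset_closure h1)).1
    have c2 := (DsinAux.closure_W_subset j (frontier_subset_closure h2)).1
    have hpi := Real.pi_pos
    have hle : |(i:ℝ) - j| * π ≤ π := by
      calc |(i:ℝ) - j| * π = |((i:ℝ)*π - z.re) + (z.re - j*π)| := by
            rw [show |(i:ℝ)-j| * π = |((i:ℝ)-j)*π| by rw [abs_mul, abs_of_pos hpi]]
            congr 1; ring
        _ ≤ |(i:ℝ)*π - z.re| + |z.re - (j:ℝ)*π| := abs_add_le _ _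
        _ ≤ π/2 + π/2 := add_le_add (by rw [abs_sub_comm]; exact c1) c2
        _ = π := by ring
    have hij' : (1:ℝ) < |(i:ℝ) - (j:ℝ)| := by exact_mod_cast hij
    nlinarith
end
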